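/- arXiv:2601.07428 — 4 statements merged into one kernel-verified Lean document; each statement's English description precedes it below -/
import Mathlib

section
/- add*_ω(nwd) = add(ℳ), where nwd is the nowhere dense ideal on 2^{<ω} and add(ℳ) is the additivity of the meager ideal. -/
open Cardinal Filter Set
open scoped ENNReal

noncomputable section

/-- An ideal on a (countable) set `X`, in the sense of the paper: a proper family of
subsets of `X` closed under taking subsets and finite unions and containing all
finite subsets of `X`. -/
structure IsIdealOn {X : Type} (I : Set (Set X)) : Prop where
  subset_mem : ∀ ⦃A B : Set X⦄, A ⊆ B → B ∈ I → A ∈ I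
  union_mem : ∀ ⦃A B : Set X⦄, A ∈ I → B ∈ I → A ∪ B ∈ I
  finite_mem : ∀ ⦃A : Set X⦄, A.Finite → A ∈ I
  proper : (univ : Set X) ∉ I

/-- The finite initial segment `x ↾ n` of `x : X^ω`, as a list (an element of `X^{<ω}`). -/
def seg {X : Type} (x : ℕ → X) (n : ℕ) : List X := (List.range n).map x

/-- The `I`-Miller null ideal `M_I`: the σ-ideal on `X^ω` generated by the sets
`M_φ = {x | ∀^∞ n, x n ∈ φ (x ↾ n)}`, where `φ : X^{<ω} → I`.  (A set is in the
generated σ-ideal iff it is covered by countably many generators.) -/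
def MIdeal {X : Type} (I : Set (Set X)) : Set (Set (ℕ → X)) :=
  {A | ∃ φ : ℕ → List X → Set X, (∀ n s, φ n s ∈ I) ∧
    A ⊆ ⋃ n, {x : ℕ → X | ∀ᶠ m in atTop, x m ∈ φ n (seg x m)}}

/-- The σ-ideal `K_I` on `X^ω` generated by the sets
`K_φ = {x | ∀^∞ n, x n ∈ φ n}`, where `φ : ω → I`. -/
def KIdeal {X : Type} (I : Set (Set X)) : Set (Set (ℕ → X)) :=
  {A | ∃ φ : ℕ → ℕ → Set X, (∀ n m, φ n m ∈ I) ∧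
    A ⊆ ⋃ n, {x : ℕ → X | ∀ᶠ m in atTop, x m ∈ φ n m}}

/-- Additivity `add(J)` of a (σ-)ideal `J`: the least cardinality of a subfamily of `J`
whose union is not in `J`. -/
def addIdeal {Y : Type} (J : Set (Set Y)) : Cardinal :=
  sInf {c | ∃ 𝒜 : Set (Set Y), 𝒜 ⊆ J ∧ ⋃₀ 𝒜 ∉ J ∧ Cardinal.mk 𝒜 = c}

/-- Covering number `cov(J)`: the least cardinality of a subfamily of `J` covering `Y`. -/
def covIdeal {Y : Type} (J : Set (Set Y)) : Cardinal :=
  sInf {c | ∃ 𝒜 : Set (Set Y), 𝒜 ⊆ J ∧ ⋃₀ 𝒜 = Set.univ ∧ Cardinal.mk 𝒜 = c}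

/-- Uniformity `non(J)`: the least cardinality of a subset of `Y` not in `J`. -/
def nonIdeal {Y : Type} (J : Set (Set Y)) : Cardinal :=
  sInf {c | ∃ S : Set Y, S ∉ J ∧ Cardinal.mk S = c}

/-- Cofinality `cof(J)`: the least cardinality of a cofinal (w.r.t. `⊆`) subfamily of `J`. -/
def cofIdeal {Y : Type} (J : Set (Set Y)) : Cardinal :=
  sInf {c | ∃ 𝒜 : Set (Set Y), 𝒜 ⊆ J ∧ (∀ B ∈ J, ∃ A ∈ 𝒜, B ⊆ A) ∧ Cardinal.mk 𝒜 = c}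

/-- `f ≤* g`: eventual domination on `ω^ω`. -/
def LeStar (f g : ℕ → ℕ) : Prop := ∀ᶠ n in atTop, f n ≤ g n

/-- The bounding number `𝔟`. -/
def bNum : Cardinal :=
  sInf {c | ∃ F : Set (ℕ → ℕ), (∀ g : ℕ → ℕ, ∃ f ∈ F, ¬ LeStar f g) ∧ Cardinal.mk F = c}

/-- The dominating number `𝔡`. -/
def dNum : Cardinal :=
  sInf {c | ∃ F : Set (ℕ → ℕ), (∀ f : ℕ → ℕ, ∃ g ∈ F, LeStar f g) ∧ Cardinal.mk F = c}

/-- `A ⊆* B`: almost inclusion (`A \ B` finite). -/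
def AlSub {X : Type} (A B : Set X) : Prop := (A \ B).Finite

/-- The set of cardinalities of witnessing families for `add*_ω(I)`: families `𝒜 ⊆ I`
such that for every countable `B̄ ⊆ I` some `A ∈ 𝒜` satisfies `A ⊄* B` for all `B ∈ B̄`.
`add*_ω(I)` is the minimum of this set (`∞` if it is empty). -/
def addStarOmegaFam {X : Type} (I : Set (Set X)) : Set Cardinal :=
  {c | ∃ 𝒜 : Set (Set X), 𝒜 ⊆ I ∧
    (∀ B : ℕ → Set X, (∀ n, B n ∈ I) → ∃ A ∈ 𝒜, ∀ n, ¬ AlSub A (B n)) ∧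
    Cardinal.mk 𝒜 = c}

/-- The set of cardinalities of witnessing families for `cof*_ω(I)`: families `𝒜` of
countable subsets of `I` such that for every countable `B̄ ⊆ I` there is `Ā ∈ 𝒜` with:
every `B ∈ B̄` satisfies `B ⊆* A` for some `A ∈ Ā`.  `cof*_ω(I)` is the minimum. -/
def cofStarOmegaFam {X : Type} (I : Set (Set X)) : Set Cardinal :=
  {c | ∃ 𝒜 : Set (Set (Set X)), (∀ As ∈ 𝒜, As.Countable ∧ As ⊆ I) ∧
    (∀ B : ℕ → Set X, (∀ n, B n ∈ I) → ∃ As ∈ 𝒜, ∀ n, ∃ A ∈ As, AlSub (B n) A) ∧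
    Cardinal.mk 𝒜 = c}

/-- The set of cardinalities of witnessing families for `non*_ω(I)`: families `𝒜` of
infinite subsets of `X` such that for every countable `B̄ ⊆ I` there is `A ∈ 𝒜` with
`A ∩ B` finite for all `B ∈ B̄`.  `non*_ω(I)` is the minimum of this set. -/
def nonStarOmegaFam {X : Type} (I : Set (Set X)) : Set Cardinal :=
  {c | ∃ 𝒜 : Set (Set X), (∀ A ∈ 𝒜, A.Infinite) ∧
    (∀ B : ℕ → Set X, (∀ n, B n ∈ I) → ∃ A ∈ 𝒜, ∀ n, (A ∩ B n).Finite) ∧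
    Cardinal.mk 𝒜 = c}

/-- The set of cardinalities of witnessing families for `cov*(I)`: families `𝒜 ⊆ I` such
that every infinite `B ⊆ X` has infinite intersection with some member of `𝒜`.
`cov*(I)` is the minimum of this set (`∞` if it is empty, i.e. if `I` is not tall). -/
def covStarFam {X : Type} (I : Set (Set X)) : Set Cardinal :=
  {c | ∃ 𝒜 : Set (Set X), 𝒜 ⊆ I ∧
    (∀ B : Set X, B.Infinite → ∃ A ∈ 𝒜, (A ∩ B).Infinite) ∧ Cardinal.mk 𝒜 = c}

/-- The set of cardinalities of witnessing families for `non*(I)`: families `𝒜` of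
infinite subsets of `X` such that every `B ∈ I` has finite intersection with some
member of `𝒜`.  `non*(I)` is the minimum of this set. -/
def nonStarFam {X : Type} (I : Set (Set X)) : Set Cardinal :=
  {c | ∃ 𝒜 : Set (Set X), (∀ A ∈ 𝒜, A.Infinite) ∧
    (∀ B ∈ I, ∃ A ∈ 𝒜, (A ∩ B).Finite) ∧ Cardinal.mk 𝒜 = c}

/-- The meager ideal of the product space `X^ω`, where `X` carries the discrete
topology (for countable `X` this is a Polish space). -/
def meagerIdeal (X : Type) : Set (Set (ℕ → X)) :=
  letI : TopologicalSpace X := ⊥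
  {A : Set (ℕ → X) | IsMeagre A}

/-- The Fubini product `I ⊗ J` of two ideals. -/
def Fubini {X Y : Type} (I : Set (Set X)) (J : Set (Set Y)) : Set (Set (X × Y)) :=
  {A | {x : X | {y : Y | (x, y) ∈ A} ∉ J} ∈ I}

/-- The ideal `Fin` of finite subsets of `X`. -/
def finIdeal (X : Type) : Set (Set X) := {A : Set X | A.Finite}

/-- The nowhere dense ideal on `2^{<ω}`: `A` belongs to it iff for every `s` there is an
extension `t ⊇ s` none of whose extensions belongs to `A`. -/
def nwdIdeal : Set (Set (List Bool)) :=
  {A | ∀ s : List Bool, ∃ t : List Bool, s <+: t ∧ ∀ u : List Bool, t <+: u → u ∉ A}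

/-- A submeasure: monotone, finitely subadditive, vanishing on `∅`. -/
def IsSubmeasure (φ : Set ℕ → ℝ≥0∞) : Prop :=
  φ ∅ = 0 ∧ (∀ A B : Set ℕ, A ⊆ B → φ A ≤ φ B) ∧ ∀ A B : Set ℕ, φ (A ∪ B) ≤ φ A + φ B

/-- `I` is gradually fragmented: there are a partition `⟨P n⟩` of `ω` into nonempty finite
sets and submeasures `φ n` with `A ∈ I ↔ sup_n φ n (A ∩ P n) < ∞`, together with
`f : ω → ω` such that for all `n, i`, for all but finitely many `j`: any family of at
most `i` subsets of `P j`, each of `φ j`-value `≤ n`, has union of `φ j`-value `≤ f n`. -/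
def GraduallyFragmented (I : Set (Set ℕ)) : Prop :=
  ∃ (P : ℕ → Set ℕ) (φ : ℕ → Set ℕ → ℝ≥0∞) (f : ℕ → ℕ),
    (∀ n, (P n).Finite) ∧ (∀ n, (P n).Nonempty) ∧
    (∀ n m, n ≠ m → Disjoint (P n) (P m)) ∧ (⋃ n, P n) = Set.univ ∧
    (∀ n, IsSubmeasure (φ n)) ∧
    (∀ A : Set ℕ, A ∈ I ↔ (⨆ n, φ n (A ∩ P n)) < ⊤) ∧
    (∀ n i : ℕ, ∀ᶠ j in atTop, ∀ ℬ : Finset (Set ℕ), ℬ.card ≤ i →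
      (∀ B ∈ ℬ, B ⊆ P j) → (∀ B ∈ ℬ, φ j B ≤ (n : ℝ≥0∞)) →
      φ j (⋃ B ∈ ℬ, B) ≤ ((f n : ℕ) : ℝ≥0∞))

/-- The basic clopen cylinder of `2^ω` determined by a finite binary string. -/
def cylSet (s : List Bool) : Set (ℕ → Bool) :=
  {x | ∀ i : Fin s.length, x i.val = s.get i}

/-- `A ⊆ 2^ω` is null for the uniform (coin-flipping) product measure: for every `ε > 0`
it is covered by countably many cylinders of total weight `≤ ε` (the cylinder of a
string `s` has weight `2^{-|s|}`). -/
def IsNullCantor (A : Set (ℕ → Bool)) : Prop :=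
  ∀ ε : ℝ≥0∞, 0 < ε → ∃ s : ℕ → List Bool,
    A ⊆ (⋃ n, cylSet (s n)) ∧ (∑' n : ℕ, (2⁻¹ : ℝ≥0∞) ^ (s n).length) ≤ ε

/-- Coordinatewise addition modulo 2 on `2^ω`. -/
def xorAdd (x y : ℕ → Bool) : ℕ → Bool := fun n => xor (x n) (y n)

/-- The transitive additivity `add_t(𝒩)` of the null ideal of `2^ω`:
`min {|A| : A ⊆ 2^ω ∧ ∃ X ∈ 𝒩, A + X ∉ 𝒩}`. -/
def addTNull : Cardinal :=
  sInf {c | ∃ A : Set (ℕ → Bool),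
    (∃ N : Set (ℕ → Bool), IsNullCantor N ∧ ¬ IsNullCantor (Set.image2 xorAdd A N)) ∧
    Cardinal.mk A = c}

/-- Kada's cardinal invariant `𝔩`: the least `κ` such that for every `g ∈ ω^ω` there is a
family `𝒮`, of size `κ`, of slaloms `S` with `S i ⊆ {0, …, g i}` and `|S i| ≤ i`, such
that every `f ≤* g` satisfies `f ∈* S` for some `S ∈ 𝒮`. -/
def lNum : Cardinal :=
  sInf {c : Cardinal | ∀ g : ℕ → ℕ, ∃ 𝒮 : Set (ℕ → Finset ℕ),
    (∀ S ∈ 𝒮, ∀ i : ℕ, S i ⊆ Finset.range (g i + 1) ∧ (S i).card ≤ i) ∧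
    (∀ f : ℕ → ℕ, LeStar f g → ∃ S ∈ 𝒮, ∀ᶠ i in atTop, f i ∈ S i) ∧
    Cardinal.mk 𝒮 = c}

/-- Membership in `C ⊆ 2^ω` only depends on the first `n` coordinates. -/
def DeterminedBy (C : Set (ℕ → Bool)) (n : ℕ) : Prop :=
  ∀ x y : ℕ → Bool, (∀ i < n, x i = y i) → (x ∈ C ↔ y ∈ C)

/-- Extension of a finite binary string by `false`s. -/
def extendFalse {n : ℕ} (s : Fin n → Bool) : ℕ → Bool :=
  fun i => if h : i < n then s ⟨i, h⟩ else false

/-- `C ⊆ 2^ω` has uniform product measure `1/2`: for some `n`, membership in `C` depends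
only on the first `n` coordinates and exactly half of the `2^n` cylinders of level `n`
are included in `C`. -/
def HalfMeasure (C : Set (ℕ → Bool)) : Prop :=
  ∃ n : ℕ, DeterminedBy C n ∧
    2 * Nat.card {s : Fin n → Bool // extendFalse s ∈ C} = 2 ^ n

/-- Clopenness in the Cantor space `2^ω` (`Bool` discrete, product topology). -/
def IsClopenCantor (C : Set (ℕ → Bool)) : Prop :=
  letI : TopologicalSpace Bool := ⊥
  IsClopen C

/-- Closedness in the Cantor space `2^ω`. -/
def IsClosedCantor (C : Set (ℕ → Bool)) : Prop :=
  letI : TopologicalSpace Bool := ⊥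
  IsClosed C

/-- `Ω`: the (countable) set of clopen subsets of `2^ω` of measure `1/2`. -/
abbrev SoleckiBase : Type := {C : Set (ℕ → Bool) // IsClopenCantor C ∧ HalfMeasure C}

/-- The Solecki ideal `𝒮` on `Ω`: the ideal generated by the sets
`I_y = {C ∈ Ω : y ∈ C}` for `y ∈ 2^ω`. -/
def SoleckiIdeal : Set (Set SoleckiBase) :=
  {A | ∃ F : Finset (ℕ → Bool), A ⊆ ⋃ y ∈ F, {C : SoleckiBase | y ∈ C.val}}

/-- `cov_ω(𝒩)`: the least cardinality of a family of Lebesgue-null sets of reals such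
that every countable set of reals is contained in one of them. -/
def covOmegaNull : Cardinal :=
  sInf {c | ∃ 𝒜 : Set (Set ℝ), (∀ N ∈ 𝒜, MeasureTheory.volume N = 0) ∧
    (∀ B : Set ℝ, B.Countable → ∃ N ∈ 𝒜, B ⊆ N) ∧ Cardinal.mk 𝒜 = c}

/-- `non(𝒩)`: the least cardinality of a non-null set of reals. -/
def nonNullReal : Cardinal :=
  sInf {c | ∃ S : Set ℝ, MeasureTheory.volume S ≠ 0 ∧ Cardinal.mk S = c}

/-- The eventually different ideal `ℰ𝒟` on `ω × ω`. -/
def EDIdeal : Set (Set (ℕ × ℕ)) :=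
  {A | ∃ k : ℕ, ∀ᶠ n in atTop,
    {m : ℕ | (n, m) ∈ A}.Finite ∧ {m : ℕ | (n, m) ∈ A}.ncard ≤ k}

/-- Characteristic function identifying `P(ω)` with `2^ω`. -/
def chiSet (A : Set ℕ) : ℕ → Bool :=
  fun n => @decide (n ∈ A) (Classical.propDecidable _)

/-- `I ⊆ P(ω)` is `F_σ`: under the identification `P(ω) ≅ 2^ω`, `I` is a countable
union of closed subsets of the Cantor space. -/
def IsFSigmaIdeal (I : Set (Set ℕ)) : Prop :=
  ∃ C : ℕ → Set (ℕ → Bool), (∀ n, IsClosedCantor (C n)) ∧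
    ∀ A : Set ℕ, A ∈ I ↔ chiSet A ∈ ⋃ n, C n

/-- The underlying countable set of `Fin^{⊗(n+1)}`: `FinPowType 0 = ω`,
`FinPowType (n+1) = ω × FinPowType n`. -/
def FinPowType : ℕ → Type
  | 0 => ℕ
  | n + 1 => ℕ × FinPowType n

/-- The iterated Fubini power of `Fin`: `FinPowIdeal 0 = Fin`, and
`FinPowIdeal (n+1) = Fin ⊗ FinPowIdeal n`; thus `Fin^{⊗k} = FinPowIdeal (k-1)`. -/
def FinPowIdeal : (n : ℕ) → Set (Set (FinPowType n))
  | 0 => finIdeal ℕ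
  | n + 1 => Fubini (finIdeal ℕ) (FinPowIdeal n)

/-- `π` `k`-constantly bounding-predicts `f`: for all but finitely many `i` there is
`j ∈ [i, i + k)` with `f j ≤ π (f ↾ j)`. -/
def ConstBddPred (k : ℕ) (π : List ℕ → ℕ) (f : ℕ → ℕ) : Prop :=
  ∀ᶠ i in atTop, ∃ j : ℕ, i ≤ j ∧ j < i + k ∧ f j ≤ π (seg f j)

/-- The constant bounding evasion number `𝔢^const_≤(k)`. -/
def eConstLe (k : ℕ) : Cardinal :=
  sInf {c | ∃ F : Set (ℕ → ℕ),
    (∀ π : List ℕ → ℕ, ∃ f ∈ F, ¬ ConstBddPred k π f) ∧ Cardinal.mk F = c}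

/-- The constant bounding prediction number `𝔳^const_≤(k)`. -/
def vConstLe (k : ℕ) : Cardinal :=
  sInf {c | ∃ Ps : Set (List ℕ → ℕ),
    (∀ f : ℕ → ℕ, ∃ π ∈ Ps, ConstBddPred k π f) ∧ Cardinal.mk Ps = c}

/-- The asymptotic density zero ideal `𝒵` on `ω`. -/
def densityZero : Set (Set ℕ) :=
  {A : Set ℕ | Tendsto (fun n : ℕ => ((A ∩ Iio n).ncard : ℝ) / (n : ℝ)) atTop (nhds (0 : ℝ))}

/-- The σ-ideal `ℰ` on `2^ω` generated by the closed null sets. -/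
def EIdeal : Set (Set (ℕ → Bool)) :=
  {A | ∃ C : ℕ → Set (ℕ → Bool),
    (∀ n, IsClosedCantor (C n) ∧ IsNullCantor (C n)) ∧ A ⊆ ⋃ n, C n}


/-!
For `B ⊆ 2^{<ω}` let `branches B` be the set of `x ∈ 2^ω` all of whose initial segments
extend to members of `B`. If `B ∈ nwd` it is closed nowhere dense, and adding finitely many
strings to `B` does not change it, so `B ⊆* B'` gives `branches B ⊆ branches B'`. Conversely
every closed nowhere dense `C` lies in `branches (tree C)` with `tree C ∈ nwd`. Hence the trees of
the closed nowhere dense pieces of `add(ℳ)` meagre sets with non-meagre union witness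
`add*_ω(nwd) ≤ add(ℳ)`: if each of them were almost contained in some `B n`, that union would
lie in the meagre set `⋃ n, branches (B n)`.

For `add(ℳ) ≤ add*_ω(nwd)`, let fewer than `add(ℳ)` sets `A ∈ nwd` be given. The strings with
no extension in `A` form a dense upward closed set, and it suffices to find countably many
dense `D J` each contained in one of these sets: `A` is then contained in the nowhere dense set
of strings with no prefix in `D J`. The `D J` are read off a single `x ∈ 2^ω` that codes, for
every level `n j` of a fast sequence, an extension of each string of length `n j` to length
`n (j + 1)`. Since `add(ℳ) ≤ 𝔟`, the levels can be chosen so that every given set is reachable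
between late consecutive levels; such an `x` is generic for fewer than `add(ℳ)` comeagre sets,
and `𝔟` once more provides blocks of levels each of which contains a level good for a given set.
-/

/-! ### Cylinders -/

section Seg

variable {X : Type}

@[simp] lemma length_seg (x : ℕ → X) (n : ℕ) : (seg x n).length = n := by simp [seg]

@[simp] lemma getElem_seg (x : ℕ → X) {n i : ℕ} (h : i < (seg x n).length) :
    (seg x n)[i] = x i := by
  simp [seg]

lemma seg_prefix_seg (x : ℕ → X) {n m : ℕ} (h : n ≤ m) : seg x n <+: seg x m := by
  rw [List.prefix_iff_eq_take, length_seg, seg, seg, ← List.map_take, List.take_range,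
    min_eq_left h]

end Seg

lemma mem_cylSet_iff {x : ℕ → Bool} {t : List Bool} : x ∈ cylSet t ↔ seg x t.length = t := by
  simp [cylSet, List.ext_getElem_iff, Fin.forall_iff]

lemma mem_cylSet_seg (x : ℕ → Bool) (n : ℕ) : x ∈ cylSet (seg x n) :=
  mem_cylSet_iff.2 (by rw [length_seg])

lemma cylSet_seg (x : ℕ → Bool) (n : ℕ) : cylSet (seg x n) = PiNat.cylinder x n := by
  ext y
  simp [cylSet, Fin.forall_iff]

lemma cylSet_eq_cylinder {x : ℕ → Bool} {t : List Bool} (hx : x ∈ cylSet t) :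
    cylSet t = PiNat.cylinder x t.length := by
  conv_lhs => rw [← mem_cylSet_iff.1 hx]
  exact cylSet_seg x _

lemma getD_mem_cylSet (t : List Bool) : (fun i => t.getD i false) ∈ cylSet t := by
  simp [cylSet]

lemma cylSet_anti {s t : List Bool} (h : s <+: t) : cylSet t ⊆ cylSet s := by
  intro x hx
  simp only [cylSet, Fin.forall_iff, List.get_eq_getElem] at hx ⊢
  intro i hi
  rw [hx i (hi.trans_le h.length_le), h.getElem hi]

lemma prefix_seg_of_mem_cylSet {x : ℕ → Bool} {s : List Bool} (hx : x ∈ cylSet s) {n : ℕ}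
    (hn : s.length ≤ n) : s <+: seg x n := by
  rw [← mem_cylSet_iff.1 hx]
  exact seg_prefix_seg x hn

lemma isOpen_cylSet (t : List Bool) : IsOpen (cylSet t) := by
  rw [cylSet_eq_cylinder (getD_mem_cylSet t)]
  exact PiNat.isOpen_cylinder _ _ _

lemma exists_cylSet_seg_subset {O : Set (ℕ → Bool)} (hO : IsOpen O) {x : ℕ → Bool}
    (hx : x ∈ O) : ∃ n, cylSet (seg x n) ⊆ O := by
  obtain ⟨_, ⟨y, n, rfl⟩, hxy, hsub⟩ :=
    (PiNat.isTopologicalBasis_cylinders _).exists_subset_of_mem_open hx hO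
  exact ⟨n, by rwa [cylSet_seg, PiNat.mem_cylinder_iff_eq.1 hxy]⟩

lemma dense_of_forall_cylSet_inter_nonempty {S : Set (ℕ → Bool)}
    (h : ∀ t, (cylSet t ∩ S).Nonempty) : Dense S := by
  refine dense_iff_inter_open.2 fun O hO ⟨x, hx⟩ => ?_
  obtain ⟨n, hn⟩ := exists_cylSet_seg_subset hO hx
  obtain ⟨y, hy, hyS⟩ := h (seg x n)
  exact ⟨y, hn hy, hyS⟩

lemma isClosed_cylSet (t : List Bool) : IsClosed (cylSet t) := by
  rw [cylSet_eq_cylinder (getD_mem_cylSet t), PiNat.cylinder_eq_pi]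
  exact isClosed_set_pi fun _ _ => isClosed_discrete _

lemma exists_forall_mem_cylSet {P : ℕ → List Bool} (hP : ∀ k, P k <+: P (k + 1)) :
    ∃ x, ∀ k, x ∈ cylSet (P k) := by
  simpa using IsCompact.nonempty_iInter_of_sequence_nonempty_isCompact_isClosed
    (fun k => cylSet (P k)) (fun k => cylSet_anti (hP k)) (fun k => ⟨_, getD_mem_cylSet _⟩)
    (isClosed_cylSet _).isCompact (fun k => isClosed_cylSet _)

/-! ### Meagre sets and additivity -/

section Meagre

variable {X : Type} [TopologicalSpace X]

lemma exists_closed_nowhereDense_cover {A : Set X} (h : IsMeagre A) :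
    ∃ C : ℕ → Set X, (∀ N, IsClosed (C N)) ∧ (∀ N, IsNowhereDense (C N)) ∧ A ⊆ ⋃ N, C N := by
  obtain ⟨S, hS, hSc, hAS⟩ := isMeagre_iff_countable_union_isNowhereDense.1 h
  obtain ⟨C, hC⟩ := (hSc.insert ∅).exists_eq_range (insert_nonempty _ _)
  have hCnd : ∀ N, IsNowhereDense (C N) := fun N => by
    rcases (hC ▸ mem_range_self N : C N ∈ insert ∅ S) with h | h
    · rw [h]; exact isNowhereDense_empty
    · exact hS _ h
  refine ⟨fun N => closure (C N), fun N => isClosed_closure, fun N => (hCnd N).closure, ?_⟩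
  refine hAS.trans (sUnion_subset fun s hs => ?_)
  obtain ⟨N, rfl⟩ : s ∈ range C := hC ▸ mem_insert_of_mem _ hs
  exact subset_closure.trans (subset_iUnion (fun N => closure (C N)) N)

lemma isMeagre_compl_iInter {O : ℕ → Set X} (hO : ∀ N, IsOpen (O N)) (hd : ∀ N, Dense (O N)) :
    IsMeagre (⋂ N, O N)ᶜ := by
  rw [IsMeagre, compl_compl]
  exact countable_iInter_mem.2 fun N => residual_of_dense_open (hO N) (hd N)

end Meagre

lemma not_isMeagre_univ : ¬ IsMeagre (univ : Set (ℕ → Bool)) :=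
  not_isMeagre_of_isOpen isOpen_univ univ_nonempty

lemma isNowhereDense_singleton (x : ℕ → Bool) : IsNowhereDense ({x} : Set (ℕ → Bool)) := by
  rw [isClosed_singleton.isNowhereDense_iff, eq_empty_iff_forall_notMem]
  intro y hy
  obtain ⟨n, hn⟩ := exists_cylSet_seg_subset isOpen_interior hy
  have hupd : Function.update y n (!y n) = x := mem_singleton_iff.1
    (interior_subset (hn (by rw [cylSet_seg]; exact PiNat.update_mem_cylinder y n _)))
  have hyx : y = x := mem_singleton_iff.1 (interior_subset hy)
  simpa using congr_fun (hupd.trans hyx.symm) n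

section Additivity

variable {Y ι : Type} {J : Set (Set Y)}

lemma addIdeal_le_mk {𝒜 : Set (Set Y)} (h𝒜 : 𝒜 ⊆ J) (hU : ⋃₀ 𝒜 ∉ J) : addIdeal J ≤ #𝒜 :=
  csInf_le' ⟨𝒜, h𝒜, hU, rfl⟩

lemma iUnion_mem_of_mk_lt_addIdeal (hι : #ι < addIdeal J) {A : ι → Set Y} (hA : ∀ i, A i ∈ J) :
    ⋃ i, A i ∈ J := by
  by_contra h
  refine ((addIdeal_le_mk (range_subset_iff.2 hA) ?_).trans mk_range_le).not_gt hι
  rwa [sUnion_range]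

end Additivity

lemma exists_forall_mem_of_mk_lt_addIdeal {ι : Type} (hι : #ι < addIdeal (meagerIdeal Bool))
    {G : ι → Set (ℕ → Bool)} (hG : ∀ i, IsMeagre (G i)ᶜ) : ∃ x, ∀ i, x ∈ G i := by
  by_contra! h
  exact not_isMeagre_univ ((iUnion_mem_of_mk_lt_addIdeal hι hG).mono fun x _ => mem_iUnion.2 (h x))

lemma exists_family_mk_eq_addIdeal_meagerIdeal :
    ∃ 𝒜 ⊆ meagerIdeal Bool, ⋃₀ 𝒜 ∉ meagerIdeal Bool ∧ #𝒜 = addIdeal (meagerIdeal Bool) := by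
  have hne : {c | ∃ 𝒜 ⊆ meagerIdeal Bool, ⋃₀ 𝒜 ∉ meagerIdeal Bool ∧ #𝒜 = c}.Nonempty := by
    refine ⟨_, range singleton,
      range_subset_iff.2 fun x => (isNowhereDense_singleton x).isMeagre, ?_, rfl⟩
    rw [sUnion_range, iUnion_singleton_eq_range, range_id']
    exact not_isMeagre_univ
  exact csInf_mem hne

lemma aleph0_lt_addIdeal_meagerIdeal : ℵ₀ < addIdeal (meagerIdeal Bool) := by
  obtain ⟨𝒜, h𝒜, hU, h⟩ := exists_family_mk_eq_addIdeal_meagerIdeal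
  rw [← h, ← not_le, mk_le_aleph0_iff]
  intro
  exact hU (sUnion_eq_iUnion ▸ isMeagre_iUnion fun A : 𝒜 => h𝒜 A.2)

/-! ### The ideal `nwd` and closed nowhere dense sets -/

section PrefixOrder

variable {α : Type}

def IsPrefixCofinal (D : Set (List α)) : Prop := ∀ s, ∃ t ∈ D, s <+: t

def IsPrefixUpperSet (U : Set (List α)) : Prop := ∀ ⦃s t⦄, s <+: t → s ∈ U → t ∈ U

def avoiding (A : Set (List α)) : Set (List α) := {t | ∀ u, t <+: u → u ∉ A}

lemma isPrefixUpperSet_avoiding (A : Set (List α)) : IsPrefixUpperSet (avoiding A) :=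
  fun _ _ hst hs u htu => hs u (hst.trans htu)

lemma exists_prefix_length_eq [Inhabited α] {t : List α} {L : ℕ} (h : t.length ≤ L) :
    ∃ u, t <+: u ∧ u.length = L :=
  ⟨t ++ List.replicate (L - t.length) default, List.prefix_append _ _, by simp; omega⟩

end PrefixOrder

lemma mem_nwdIdeal_iff {A : Set (List Bool)} : A ∈ nwdIdeal ↔ IsPrefixCofinal (avoiding A) :=
  forall_congr' fun _ => ⟨fun ⟨t, hst, ht⟩ => ⟨t, ht, hst⟩, fun ⟨t, ht, hst⟩ => ⟨t, hst, ht⟩⟩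

lemma setOf_forall_not_prefix_mem_nwdIdeal {D : Set (List Bool)} (hD : IsPrefixCofinal D) :
    {u | ∀ t ∈ D, ¬ t <+: u} ∈ nwdIdeal :=
  mem_nwdIdeal_iff.2 fun s =>
    let ⟨t, ht, hst⟩ := hD s
    ⟨t, fun _ htu hu => hu t ht htu, hst⟩

lemma isPrefixCofinal_setOf_disjoint {C : Set (ℕ → Bool)} (hC : IsClosed C)
    (hnd : IsNowhereDense C) : IsPrefixCofinal {t | Disjoint (cylSet t) C} := by
  intro s
  have hd : Dense Cᶜ := (isClosed_isNowhereDense_iff_compl.1 ⟨hC, hnd⟩).2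
  obtain ⟨x, hxC, hxs⟩ := hd.exists_mem_open (isOpen_cylSet s) ⟨_, getD_mem_cylSet s⟩
  obtain ⟨n, hn⟩ := exists_cylSet_seg_subset hC.isOpen_compl hxC
  refine ⟨seg x (max n s.length), ?_, prefix_seg_of_mem_cylSet hxs (le_max_right _ _)⟩
  exact subset_compl_iff_disjoint_right.1
    ((cylSet_anti (seg_prefix_seg x (le_max_left _ _))).trans hn)

lemma IsPrefixCofinal.dense_biUnion_cylSet {D : Set (List Bool)} (hD : IsPrefixCofinal D) :
    Dense (⋃ t ∈ D, cylSet t) :=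
  dense_of_forall_cylSet_inter_nonempty fun s =>
    let ⟨t, ht, hst⟩ := hD s
    ⟨_, cylSet_anti hst (getD_mem_cylSet t), mem_biUnion ht (getD_mem_cylSet t)⟩

def branches (B : Set (List Bool)) : Set (ℕ → Bool) := {x | ∀ n, ∃ u ∈ B, seg x n <+: u}

def tree (C : Set (ℕ → Bool)) : Set (List Bool) := {t | (cylSet t ∩ C).Nonempty}

lemma subset_branches_tree (C : Set (ℕ → Bool)) : C ⊆ branches (tree C) :=
  fun x hx n => ⟨seg x n, ⟨x, mem_cylSet_seg x n, hx⟩, List.prefix_refl _⟩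

lemma tree_mem_nwdIdeal {C : Set (ℕ → Bool)} (hC : IsClosed C) (hnd : IsNowhereDense C) :
    tree C ∈ nwdIdeal :=
  mem_nwdIdeal_iff.2 fun s =>
    let ⟨t, ht, hst⟩ := isPrefixCofinal_setOf_disjoint hC hnd s
    ⟨t, fun _ htu hu => not_disjoint_iff_nonempty_inter.2 hu (ht.mono_left (cylSet_anti htu)), hst⟩

lemma isNowhereDense_branches {B : Set (List Bool)} (hB : B ∈ nwdIdeal) :
    IsNowhereDense (branches B) := by
  have hsub : branches B ⊆ (⋃ t ∈ avoiding B, cylSet t)ᶜ := by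
    intro x hx hx'
    obtain ⟨t, ht, hxt⟩ := mem_iUnion₂.1 hx'
    obtain ⟨u, hu, hxu⟩ := hx t.length
    exact ht u (by rwa [mem_cylSet_iff.1 hxt] at hxu) hu
  refine IsNowhereDense.mono hsub (isClosed_isNowhereDense_iff_compl.2 ?_).2
  rw [compl_compl]
  exact ⟨isOpen_biUnion fun t _ => isOpen_cylSet t,
    (mem_nwdIdeal_iff.1 hB).dense_biUnion_cylSet⟩

lemma branches_subset_of_alSub {W B : Set (List Bool)} (h : AlSub W B) :
    branches W ⊆ branches B := by
  intro x hx n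
  obtain ⟨L, hL⟩ := (h.image List.length).bddAbove
  obtain ⟨u, hu, hxu⟩ := hx (max n (L + 1))
  have hlen : L < u.length := by
    have := hxu.length_le
    rw [length_seg] at this
    omega
  refine ⟨u, by_contra fun huB => ?_, (seg_prefix_seg x (le_max_left _ _)).trans hxu⟩
  exact hlen.not_ge (hL ⟨u, ⟨hu, huB⟩, rfl⟩)

lemma exists_tree_forall_not_alSub {ι : Type} {C : ι → Set (ℕ → Bool)}
    (hC : ¬ IsMeagre (⋃ i, C i)) {B : ℕ → Set (List Bool)} (hB : ∀ n, B n ∈ nwdIdeal) :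
    ∃ i, ∀ n, ¬ AlSub (tree (C i)) (B n) := by
  by_contra! h
  choose n hn using h
  refine hC ((isMeagre_iUnion fun k => (isNowhereDense_branches (hB k)).isMeagre).mono ?_)
  exact iUnion_subset fun i => (subset_branches_tree _).trans
    ((branches_subset_of_alSub (hn i)).trans (subset_iUnion (fun k => branches (B k)) (n i)))

lemma exists_mem_addStarOmegaFam_le :
    ∃ c ∈ addStarOmegaFam nwdIdeal, c ≤ addIdeal (meagerIdeal Bool) := by
  obtain ⟨𝒜, h𝒜, hU, h𝒜c⟩ := exists_family_mk_eq_addIdeal_meagerIdeal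
  choose C hC hCnd hcov using fun A : 𝒜 => exists_closed_nowhereDense_cover (h𝒜 A.2)
  let W : 𝒜 × ℕ → Set (List Bool) := fun p => tree (C p.1 p.2)
  refine ⟨#(range W), ⟨range W, range_subset_iff.2 fun p => tree_mem_nwdIdeal (hC _ _) (hCnd _ _),
    fun B hB => ?_, rfl⟩, ?_⟩
  · have hCU : ¬ IsMeagre (⋃ p : 𝒜 × ℕ, C p.1 p.2) := fun hM =>
      hU (hM.mono (sUnion_subset fun A hA => (hcov ⟨A, hA⟩).trans
        (iUnion_subset fun N => subset_iUnion (fun p : 𝒜 × ℕ => C p.1 p.2) (⟨A, hA⟩, N))))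
    obtain ⟨p, hp⟩ := exists_tree_forall_not_alSub hCU hB
    exact ⟨W p, mem_range_self p, hp⟩
  · calc #(range W) ≤ #(𝒜 × ℕ) := mk_range_le
      _ = addIdeal (meagerIdeal Bool) := by
        rw [mk_prod, lift_id, lift_id, mk_nat, h𝒜c]
        exact mul_aleph0_eq aleph0_lt_addIdeal_meagerIdeal.le

/-! ### `add(ℳ) ≤ 𝔟` -/

lemma exists_extension_length_bound {D : ℕ → Set (List Bool)} (hD : ∀ N, IsPrefixCofinal (D N)) :
    ∃ g : ℕ → ℕ, ∀ s N, ∃ t ∈ D N, s <+: t ∧ t.length ≤ g (max s.length N) := by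
  choose e he using fun s N => hD N s
  refine ⟨fun n => ((List.finite_length_le Bool n).toFinset ×ˢ Finset.range (n + 1)).sup
    fun p => (e p.1 p.2).length, fun s N => ⟨e s N, (he s N).1, (he s N).2, ?_⟩⟩
  refine Finset.le_sup (f := fun p : List Bool × ℕ => (e p.1 p.2).length) (b := (s, N)) ?_
  simp only [Finset.mem_product, Set.Finite.mem_toFinset, Finset.mem_range]
  exact ⟨le_max_left (α := ℕ) _ _, Nat.lt_succ_of_le (le_max_right _ _)⟩

lemma exists_monotone_le (f : ℕ → ℕ) :
    ∃ f' : ℕ → ℕ, Monotone f' ∧ (∀ n, n ≤ f' n) ∧ ∀ n, f n ≤ f' n :=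
  ⟨fun n => n + (Finset.range (n + 1)).sup f,
    fun _ _ h => add_le_add h (Finset.sup_mono (Finset.range_subset_range.2 (by omega))),
    fun _ => Nat.le_add_right _ _,
    fun n => (Finset.le_sup (Finset.self_mem_range_succ n)).trans (Nat.le_add_left _ _)⟩

lemma exists_le_and_lt_succ {a : ℕ → ℕ} (h0 : a 0 = 0) (ha : ∀ k, a k < a (k + 1)) (n : ℕ) :
    ∃ k, a k ≤ n ∧ n < a (k + 1) := by
  induction n with
  | zero => exact ⟨0, by omega, by have := ha 0; omega⟩
  | succ n ih =>
    obtain ⟨k, hk, hnk⟩ := ih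
    by_cases h : n + 1 < a (k + 1)
    · exact ⟨k, by omega, h⟩
    · exact ⟨k + 1, by omega, by have := ha (k + 1); omega⟩

def hitSet (f : ℕ → ℕ) : Set (ℕ → Bool) :=
  {x | ∀ᶠ n in atTop, ∃ m, n ≤ m ∧ m ≤ f n ∧ x m = true}

lemma isMeagre_hitSet (f : ℕ → ℕ) : IsMeagre (hitSet f) := by
  let O : ℕ → Set (ℕ → Bool) := fun N => ⋃ n ≥ N, ⋂ m ∈ Finset.Icc n (f n), {x | x m = false}
  refine (isMeagre_compl_iInter (O := O) (fun N => ?_) (fun N => ?_)).mono fun x hx => ?_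
  · exact isOpen_biUnion fun n _ => isOpen_biInter_finset fun m _ =>
      (continuous_apply (A := fun _ => Bool) m).isOpen_preimage {false} (isOpen_discrete _)
  · refine dense_of_forall_cylSet_inter_nonempty fun t =>
      ⟨fun k => if k < t.length then t.getD k false else false, ?_, ?_⟩
    · simp [cylSet]
    · refine mem_iUnion₂.2 ⟨max N t.length, le_max_left _ _, mem_iInter₂.2 fun m hm => ?_⟩
      have : ¬ m < t.length := by simp at hm; omega
      simp [this]
  · intro hxO
    obtain ⟨N, hN⟩ := eventually_atTop.1 hx
    obtain ⟨n, hn, hx0⟩ := mem_iUnion₂.1 (mem_iInter.1 hxO N)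
    obtain ⟨m, hnm, hmf, hxm⟩ := hN n hn
    simpa [hxm] using mem_iInter₂.1 hx0 m (Finset.mem_Icc.2 ⟨hnm, hmf⟩)

lemma apply_eq_of_mem_cylSet_append_replicate {x : ℕ → Bool} {s : List Bool} {k m : ℕ} {b : Bool}
    (hx : x ∈ cylSet (s ++ List.replicate k b)) (h₁ : s.length ≤ m) (h₂ : m < s.length + k) :
    x m = b := by
  have := hx ⟨m, by simp; omega⟩
  simpa [List.getElem_append_right h₁] using this

lemma exists_hit_of_mem_cylSet {f : ℕ → ℕ} (hf : Monotone f) (hid : ∀ n, n ≤ f n)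
    {p t : List Bool} {ν : ℕ} (hpt : p ++ List.replicate (ν - p.length) true <+: t)
    (ht : t.length < f ν) {x : ℕ → Bool} (hx : x ∈ cylSet (t ++ [true])) {n : ℕ}
    (hn₁ : p.length ≤ n) (hn₂ : n ≤ t.length) : ∃ m, n ≤ m ∧ m ≤ f n ∧ x m = true := by
  by_cases hnν : n < ν
  · refine ⟨n, le_rfl, hid n, apply_eq_of_mem_cylSet_append_replicate
      (cylSet_anti (hpt.trans (List.prefix_append _ _)) hx) hn₁ (by omega)⟩
  · exact ⟨t.length, hn₂, ht.le.trans (hf (not_lt.1 hnν)),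
      apply_eq_of_mem_cylSet_append_replicate (k := 1) hx le_rfl (by omega)⟩

lemma exists_mem_hitSet_forall_mem_cylSet {D : ℕ → Set (List Bool)} {g : ℕ → ℕ}
    (hg : ∀ s N, ∃ t ∈ D N, s <+: t ∧ t.length ≤ g (max s.length N))
    {f : ℕ → ℕ} (hf : Monotone f) (hid : ∀ n, n ≤ f n) (hfg : ¬ LeStar f g) :
    ∃ x ∈ hitSet f, ∀ N, ∃ t ∈ D N, x ∈ cylSet t := by
  -- Stage `k`: pad with `true`s up to some `ν ≥ k` with `g ν < f ν`, extend into `D k` within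
  -- length `g ν`, and append `true`. Every gap between `true`s is then shorter than `f`.
  choose esc hesc using hg
  obtain ⟨ν, hν⟩ : ∃ ν : ℕ → ℕ, ∀ a, a ≤ ν a ∧ g (ν a) < f (ν a) := by
    simp only [LeStar, not_eventually, not_le, frequently_atTop] at hfg
    choose ν hν using hfg
    exact ⟨ν, hν⟩
  let pad : ℕ → List Bool → List Bool := fun k p =>
    p ++ List.replicate (ν (max p.length k) - p.length) true
  let P : ℕ → List Bool := fun k => Nat.rec [] (fun k p => esc (pad k p) k ++ [true]) k
  have hP : ∀ k, P (k + 1) = esc (pad k (P k)) k ++ [true] := fun k => rfl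
  have hpad : ∀ k, (pad k (P k)).length = ν (max (P k).length k) := fun k => by
    have := (hν (max (P k).length k)).1
    simp only [pad, List.length_append, List.length_replicate]
    omega
  obtain ⟨x, hx⟩ := exists_forall_mem_cylSet (P := P) fun k => by
    rw [hP]
    exact (List.prefix_append _ _).trans ((hesc _ _).2.1.trans (List.prefix_append _ _))
  have hlen : ∀ k, (P k).length < (P (k + 1)).length := fun k => by
    have h₁ := (hesc (pad k (P k)) k).2.1.length_le
    have h₂ := (hν (max (P k).length k)).1
    rw [hpad] at h₁
    rw [hP, List.length_append, List.length_singleton]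
    omega
  refine ⟨x, Eventually.of_forall fun n => ?_, fun N =>
    ⟨_, (hesc _ N).1, cylSet_anti (List.prefix_append _ _) (hP N ▸ hx (N + 1))⟩⟩
  obtain ⟨k, hk₁, hk₂⟩ := exists_le_and_lt_succ rfl hlen n
  change n < (esc (pad k (P k)) k ++ [true]).length at hk₂
  rw [List.length_append, List.length_singleton] at hk₂
  have hbound := (hesc (pad k (P k)) k).2.2
  have hνk := hν (max (P k).length k)
  rw [hpad, max_eq_left (le_trans (le_max_right _ _) hνk.1)] at hbound
  exact exists_hit_of_mem_cylSet (t := esc (pad k (P k)) k) hf hid (hesc _ _).2.1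
    (hbound.trans_lt hνk.2) (hP k ▸ hx (k + 1)) hk₁ (by omega)

lemma addIdeal_meagerIdeal_le_bNum : addIdeal (meagerIdeal Bool) ≤ bNum := by
  refine le_csInf ⟨_, univ, fun g => ⟨g + 1, trivial, fun h => ?_⟩, rfl⟩ ?_
  · obtain ⟨n, hn⟩ := h.exists
    simp at hn
  rintro _ ⟨F, hF, rfl⟩
  choose f' hf'mono hf'id hf' using exists_monotone_le
  refine (addIdeal_le_mk (𝒜 := range fun f : F => hitSet (f' f))
    (range_subset_iff.2 fun f => isMeagre_hitSet _) fun hM => ?_).trans mk_range_le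
  rw [sUnion_range] at hM
  obtain ⟨C, hC, hCnd, hcov⟩ := exists_closed_nowhereDense_cover hM
  obtain ⟨g, hg⟩ :=
    exists_extension_length_bound fun N => isPrefixCofinal_setOf_disjoint (hC N) (hCnd N)
  obtain ⟨f, hfF, hfg⟩ := hF g
  obtain ⟨x, hx, hxC⟩ := exists_mem_hitSet_forall_mem_cylSet hg (hf'mono f) (hf'id f)
    fun h => hfg (h.mono fun n hn => (hf' f n).trans hn)
  obtain ⟨N, hN⟩ := mem_iUnion.1 (hcov (mem_iUnion.2 ⟨⟨f, hfF⟩, hx⟩))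
  obtain ⟨t, ht, hxt⟩ := hxC N
  exact disjoint_left.1 ht hxt hN

lemma exists_forall_leStar_of_mk_lt_bNum {ι : Type} (hι : #ι < bNum) (f : ι → ℕ → ℕ) :
    ∃ g, ∀ i, LeStar (f i) g := by
  by_contra! h
  have hb : bNum ≤ #(range f) := csInf_le' ⟨range f, fun g => ?_, rfl⟩
  · exact (hb.trans mk_range_le).not_gt hι
  obtain ⟨i, hi⟩ := h g
  exact ⟨f i, mem_range_self i, hi⟩

/-! ### Countable refinements of dense sets of strings -/

lemma exists_levels_extending_into {ι : Type} (hι : #ι < bNum) {U : ι → Set (List Bool)}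
    (hup : ∀ i, IsPrefixUpperSet (U i)) (hcof : ∀ i, IsPrefixCofinal (U i)) :
    ∃ n : ℕ → ℕ, StrictMono n ∧ ∀ i, ∀ᶠ j in atTop,
      ∀ s, s.length = n j → ∃ t ∈ U i, s <+: t ∧ t.length = n (j + 1) := by
  choose F hF using fun i => exists_extension_length_bound fun _ : ℕ => hcof i
  obtain ⟨g, hg⟩ := exists_forall_leStar_of_mk_lt_bNum hι F
  obtain ⟨g', hg'⟩ : ∃ g' : ℕ → ℕ, ∀ k, k < g' k ∧ g k ≤ g' k :=
    ⟨fun k => max (g k) (k + 1), fun k => ⟨lt_max_of_lt_right k.lt_succ_self, le_max_left _ _⟩⟩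
  have hn : StrictMono fun j => g'^[j] 0 := strictMono_nat_of_lt_succ fun j => by
    rw [Function.iterate_succ_apply']
    exact (hg' _).1
  refine ⟨fun j => g'^[j] 0, hn, fun i => ?_⟩
  filter_upwards [hn.tendsto_atTop.eventually (hg i)] with j hj s hs
  obtain ⟨t, ht, hst, htl⟩ := hF i s 0
  rw [max_eq_left (Nat.zero_le _), hs] at htl
  have htl' : t.length ≤ g'^[j + 1] 0 := by
    rw [Function.iterate_succ_apply']
    exact htl.trans (hj.trans (hg' _).2)
  obtain ⟨u, htu, hul⟩ := exists_prefix_length_eq htl'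
  exact ⟨u, hup i htu ht, hst.trans htu, hul⟩

lemma exists_strictMono_forall_eventually_exists_mem_Ico {ι : Type} (hι : #ι < bNum)
    {P : ι → ℕ → Prop} (hP : ∀ i, ∃ᶠ j in atTop, P i j) :
    ∃ m : ℕ → ℕ, StrictMono m ∧ ∀ i, ∀ᶠ I in atTop, ∃ j, m I ≤ j ∧ j < m (I + 1) ∧ P i j := by
  choose e he using fun i => frequently_atTop.1 (hP i)
  obtain ⟨h, hh⟩ := exists_forall_leStar_of_mk_lt_bNum hι e
  obtain ⟨h', hh'⟩ : ∃ h' : ℕ → ℕ, ∀ a, a < h' a ∧ h a < h' a :=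
    ⟨fun a => max (h a) a + 1,
      fun a => ⟨Nat.lt_succ_of_le (le_max_right _ _), Nat.lt_succ_of_le (le_max_left _ _)⟩⟩
  have hm : StrictMono fun I => h'^[I] 0 := strictMono_nat_of_lt_succ fun I => by
    rw [Function.iterate_succ_apply']
    exact (hh' _).1
  refine ⟨fun I => h'^[I] 0, hm, fun i => ?_⟩
  filter_upwards [hm.tendsto_atTop.eventually (hh i)] with I hI
  refine ⟨e i (h'^[I] 0), (he i _).1, ?_, (he i _).2⟩
  rw [Function.iterate_succ_apply']
  exact hI.trans_lt (hh' _).2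

lemma le_encode_prod {β : Type} [Encodable β] (a : ℕ) (b : β) : a ≤ Encodable.encode (a, b) := by
  rw [Encodable.encode_prod_val, Encodable.encode_nat]
  exact Nat.left_le_pair _ _

/-- The bits appended to `s` are read off `x` at the positions `encode (j, s, r)`, which differ
for different `(j, s, r)`; so one `x` can prescribe the extensions of all strings at all levels
independently. -/
def codedExt (n : ℕ → ℕ) (x : ℕ → Bool) (j : ℕ) (s : List Bool) : List Bool :=
  s ++ List.ofFn fun r : Fin (n (j + 1) - n j) => x (Encodable.encode (j, s, (r : ℕ)))

lemma isOpen_setOf_codedExt_mem (n : ℕ → ℕ) (j : ℕ) (s : List Bool) (U : Set (List Bool)) :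
    IsOpen {x | codedExt n x j s ∈ U} :=
  show IsOpen ((fun x : ℕ → Bool => fun r : Fin (n (j + 1) - n j) =>
    x (Encodable.encode (j, s, (r : ℕ)))) ⁻¹' {w | s ++ List.ofFn w ∈ U}) from
  (isOpen_discrete {w : Fin (n (j + 1) - n j) → Bool | s ++ List.ofFn w ∈ U}).preimage
    (continuous_pi fun _ => continuous_apply _)

lemma append_ofFn_getD {s u : List Bool} (h : s <+: u) {k : ℕ} (hk : u.length = s.length + k) :
    s ++ List.ofFn (fun r : Fin k => u.getD (s.length + r) false) = u := by
  refine List.ext_getElem (by simp [hk]) fun i h₁ h₂ => ?_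
  by_cases hi : i < s.length
  · rw [List.getElem_append_left hi, h.getElem hi]
  · rw [List.getElem_append_right (not_lt.1 hi)]
    simp [Nat.add_sub_cancel' (not_lt.1 hi), h₂]

lemma exists_mem_cylSet_codedExt_eq {n : ℕ → ℕ} (hn : Monotone n) (t : List Bool) {j : ℕ}
    (hj : t.length ≤ j) (e : List Bool → List Bool)
    (he : ∀ s, s.length = n j → s <+: e s ∧ (e s).length = n (j + 1)) :
    ∃ y ∈ cylSet t, ∀ s, s.length = n j → codedExt n y j s = e s := by
  let x₀ : ℕ → Bool := fun k => t.getD k false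
  let φ : ℕ × List Bool × ℕ → Bool := fun p =>
    if p.1 = j then (e p.2.1).getD (n j + p.2.2) false else x₀ (Encodable.encode p)
  obtain ⟨y, hy, hy'⟩ : ∃ y : ℕ → Bool, (∀ p, y (Encodable.encode p) = φ p) ∧
      ∀ k, (¬ ∃ p, Encodable.encode p = k) → y k = x₀ k :=
    ⟨_, Encodable.encode_injective.extend_apply φ x₀, fun k hk => Function.extend_apply' _ _ _ hk⟩
  refine ⟨y, fun i => ?_, fun s hs => ?_⟩
  · refine Eq.trans ?_ (getD_mem_cylSet t i)
    by_cases hi : ∃ p : ℕ × List Bool × ℕ, Encodable.encode p = i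
    · obtain ⟨p, hp⟩ := hi
      have hpj : p.1 ≠ j := fun h => by
        have := (le_encode_prod p.1 p.2).trans_eq hp
        omega
      rw [← hp, hy]
      exact if_neg hpj
    · exact hy' _ hi
  · have h := he s hs
    rw [← append_ofFn_getD h.1 (k := n (j + 1) - n j)
      (by have := hn (Nat.le_add_right j 1); omega)]
    simp only [codedExt, hy, φ, if_pos, hs]

lemma exists_forall_frequently_codedExt_mem {ι : Type} (hι : #ι < addIdeal (meagerIdeal Bool))
    {n : ℕ → ℕ} (hn : StrictMono n) {U : ι → Set (List Bool)}
    (hU : ∀ i, ∀ᶠ j in atTop, ∀ s, s.length = n j → ∃ t ∈ U i, s <+: t ∧ t.length = n (j + 1)) :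
    ∃ x, ∀ i, ∃ᶠ j in atTop, ∀ s, s.length = n j → codedExt n x j s ∈ U i := by
  let G : ι → Set (ℕ → Bool) := fun i =>
    ⋂ J, ⋃ j ≥ J, ⋂ s ∈ {s : List Bool | s.length = n j}, {x | codedExt n x j s ∈ U i}
  have hG : ∀ i, IsMeagre (G i)ᶜ := fun i => isMeagre_compl_iInter (fun J => ?_) (fun J => ?_)
  · obtain ⟨x, hx⟩ := exists_forall_mem_of_mk_lt_addIdeal hι hG
    refine ⟨x, fun i => frequently_atTop.2 fun J => ?_⟩
    obtain ⟨j, hj, hjx⟩ := mem_iUnion₂.1 (mem_iInter.1 (hx i) J)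
    exact ⟨j, hj, fun s hs => mem_iInter₂.1 hjx s hs⟩
  · exact isOpen_biUnion fun j _ => (List.finite_length_eq Bool (n j)).isOpen_biInter
      fun s _ => isOpen_setOf_codedExt_mem n j s (U i)
  · refine dense_of_forall_cylSet_inter_nonempty fun t => ?_
    obtain ⟨N, hN⟩ := eventually_atTop.1 (hU i)
    let j := max (max J t.length) N
    choose! e he using hN j (le_max_right _ _)
    obtain ⟨y, hyt, hy⟩ := exists_mem_cylSet_codedExt_eq hn.monotone t (j := j)
      (le_trans (le_max_right _ _) (le_max_left _ _)) e fun s hs => (he s hs).2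
    exact ⟨y, hyt, mem_iUnion₂.2 ⟨j, le_trans (le_max_left _ _) (le_max_left _ _),
      mem_iInter₂.2 fun s hs => show codedExt n y j s ∈ U i from (hy s hs) ▸ (he s hs).1⟩⟩

def codedClimb (n : ℕ → ℕ) (x : ℕ → Bool) (a : ℕ) (s : List Bool) : ℕ → List Bool
  | 0 => s
  | d + 1 => codedExt n x (a + d) (codedClimb n x a s d)

section CodedClimb

variable {n : ℕ → ℕ} {x : ℕ → Bool} {a : ℕ} {s : List Bool}

lemma length_codedClimb (hn : Monotone n) (hs : s.length = n a) (d : ℕ) :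
    (codedClimb n x a s d).length = n (a + d) := by
  induction d with
  | zero => exact hs
  | succ d ih =>
    have := hn (Nat.le_add_right (a + d) 1)
    rw [← Nat.add_assoc]
    simp only [codedClimb, codedExt, List.length_append, List.length_ofFn, ih]
    omega

lemma codedClimb_prefix_codedClimb {d d' : ℕ} (h : d ≤ d') :
    codedClimb n x a s d <+: codedClimb n x a s d' := by
  induction h with
  | refl => exact List.prefix_refl _
  | step _ ih => exact ih.trans (List.prefix_append _ _)

lemma codedClimb_mem (hn : Monotone n) {U : Set (List Bool)} (hU : IsPrefixUpperSet U)
    (hs : s.length = n a) {j d : ℕ} (haj : a ≤ j) (hjd : j < a + d)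
    (hgood : ∀ s, s.length = n j → codedExt n x j s ∈ U) : codedClimb n x a s d ∈ U := by
  obtain ⟨c, rfl⟩ : ∃ c, j = a + c := ⟨j - a, by omega⟩
  have h := hgood _ (length_codedClimb (x := x) hn hs c)
  exact hU (codedClimb_prefix_codedClimb (d := c + 1) (by omega)) h

end CodedClimb

theorem exists_countable_refinement {ι : Type} (hι : #ι < addIdeal (meagerIdeal Bool))
    {U : ι → Set (List Bool)} (hup : ∀ i, IsPrefixUpperSet (U i))
    (hcof : ∀ i, IsPrefixCofinal (U i)) :
    ∃ D : ℕ → Set (List Bool), (∀ J, IsPrefixCofinal (D J)) ∧ ∀ i, ∃ J, D J ⊆ U i := by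
  have hb := hι.trans_le addIdeal_meagerIdeal_le_bNum
  obtain ⟨n, hn, hreach⟩ := exists_levels_extending_into hb hup hcof
  obtain ⟨x, hx⟩ := exists_forall_frequently_codedExt_mem hι hn hreach
  obtain ⟨m, hm, hblock⟩ := exists_strictMono_forall_eventually_exists_mem_Ico hb hx
  -- `D J` collects the climbs through whole blocks `[m I, m (I + 1))` with `I ≥ J`; late blocks
  -- contain a level good for `U i`, and `U i` is upward closed.
  let T : ℕ → List Bool → List Bool := fun I s => codedClimb n x (m I) s (m (I + 1) - m I)
  refine ⟨fun J => {t | ∃ I ≥ J, ∃ s, s.length = n (m I) ∧ t = T I s}, fun J r => ?_, fun i => ?_⟩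
  · let I := max J r.length
    obtain ⟨s, hrs, hs⟩ := exists_prefix_length_eq
      ((le_max_right J r.length).trans ((hm.id_le I).trans (hn.id_le _)))
    exact ⟨T I s, ⟨I, le_max_left _ _, s, hs, rfl⟩,
      hrs.trans (codedClimb_prefix_codedClimb (Nat.zero_le _))⟩
  · obtain ⟨J, hJ⟩ := eventually_atTop.1 (hblock i)
    refine ⟨J, ?_⟩
    rintro _ ⟨I, hI, s, hs, rfl⟩
    obtain ⟨j, hj₁, hj₂, hgood⟩ := hJ I hI
    exact codedClimb_mem hn.monotone (hup i) hs hj₁ (by omega) hgood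

lemma addIdeal_le_of_mem_addStarOmegaFam {c : Cardinal} (hc : c ∈ addStarOmegaFam nwdIdeal) :
    addIdeal (meagerIdeal Bool) ≤ c := by
  obtain ⟨𝒜, h𝒜, hwit, rfl⟩ := hc
  by_contra! hlt
  obtain ⟨D, hD, hDU⟩ := exists_countable_refinement hlt (U := fun A : 𝒜 => avoiding A.1)
    (fun _ => isPrefixUpperSet_avoiding _) (fun A => mem_nwdIdeal_iff.1 (h𝒜 A.2))
  obtain ⟨A, hA, hAB⟩ := hwit _ fun J => setOf_forall_not_prefix_mem_nwdIdeal (hD J)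
  obtain ⟨J, hJ⟩ := hDU ⟨A, hA⟩
  exact hAB J (finite_empty.subset fun u ⟨hu, huB⟩ => huB fun t ht htu => hJ ht u htu hu)

/-- `add*_ω(nwd) = add(ℳ)`. -/
theorem stmt6 : sInf (addStarOmegaFam nwdIdeal) = addIdeal (meagerIdeal Bool) := by
  obtain ⟨c, hc, hle⟩ := exists_mem_addStarOmegaFam_le
  exact le_antisymm ((csInf_le' hc).trans hle)
    (le_csInf ⟨c, hc⟩ fun _ => addIdeal_le_of_mem_addStarOmegaFam)

end
end

section
/- For every gradually fragmented ideal I on ω, cof*_ω(I) ≤ 𝔩. -/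
open Cardinal Filter Set
open scoped ENNReal

noncomputable section

/-!
Given `B n ∈ I`, fix natural bounds `m n ≥ φ j (B n ∩ P j)` for all `j`. Group the pieces
`P j` into consecutive blocks `[c i, c (i + 1))` lying so far out that on block `i` the
gradual fragmentation bound holds for families of at most `i` sets of submeasure `≤ m`,
for every `m ≤ i`. The traces on block `i` of those `B n` with `n, m n ≤ i` range over
finitely many codes, so one slalom `S` from a family of size `𝔩` captures the whole sequence
of traces. Each slalom `S` yields countably many sets `A S n m`, the unions of the
`(n, m)`-slices `{x | (n, m, x) ∈ H}` of the codes `H` allowed by `S`. On a piece of block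
`i`, `A S n m` is a union of at most `i` sets of submeasure `≤ m`, so `A S n m ∈ I`; and
`B n ⊆* A S n (m n)`.
-/

def slaloms (g : ℕ → ℕ) : Set (ℕ → Finset ℕ) :=
  {S | ∀ i, S i ⊆ Finset.range (g i + 1) ∧ (S i).card ≤ i}

theorem mk_slaloms (g : ℕ → ℕ) : #(slaloms g) = 𝔠 := by
  refine le_antisymm ((mk_set_le _).trans (by simp)) ?_
  let code : (ℕ → Bool) → slaloms g := fun x =>
    ⟨fun | 0 => ∅ | n + 1 => if x n then {0} else ∅, fun
      | 0 => by simp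
      | n + 1 => by dsimp only; split_ifs <;> simp⟩
  have hcode : Function.Injective code := fun x y hxy => funext fun n => by
    have h := congrFun (congrArg Subtype.val hxy) (n + 1)
    cases hx : x n <;> cases hy : y n <;> simp_all [code]
  simpa using mk_le_of_injective hcode

theorem exists_mem_slaloms_of_leStar (g f : ℕ → ℕ) (hfg : LeStar f g) :
    ∃ S ∈ slaloms g, ∀ᶠ i in atTop, f i ∈ S i := by
  refine ⟨fun i => if i = 0 then ∅ else Finset.range (g i + 1) ∩ {f i}, fun i => ?_, ?_⟩
  · dsimp only
    split_ifs with hi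
    · simp [hi]
    · exact ⟨Finset.inter_subset_left,
        (Finset.card_le_card Finset.inter_subset_right).trans (by simp; omega)⟩
  · filter_upwards [hfg, eventually_ne_atTop 0] with i hi hi0
    simp [hi0, Nat.lt_succ_of_le hi]

theorem lNum_spec (g : ℕ → ℕ) : ∃ 𝒮 : Set (ℕ → Finset ℕ),
    (∀ S ∈ 𝒮, ∀ i : ℕ, S i ⊆ Finset.range (g i + 1) ∧ (S i).card ≤ i) ∧
    (∀ f : ℕ → ℕ, LeStar f g → ∃ S ∈ 𝒮, ∀ᶠ i in atTop, f i ∈ S i) ∧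
    #𝒮 = lNum :=
  (csInf_mem ⟨𝔠, fun g => ⟨slaloms g, fun _ hS => hS, exists_mem_slaloms_of_leStar g,
    mk_slaloms g⟩⟩ : lNum ∈ _) g

theorem exists_slaloms_of_finset {α : Type} [Encodable α] (Y : ℕ → Finset α) :
    ∃ 𝒮 : Set (ℕ → Finset α), #𝒮 ≤ lNum ∧ (∀ S ∈ 𝒮, ∀ i, S i ⊆ Y i ∧ (S i).card ≤ i) ∧
      ∀ h : ℕ → α, (∀ i, h i ∈ Y i) → ∃ S ∈ 𝒮, ∀ᶠ i in atTop, h i ∈ S i := by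
  classical
  obtain ⟨𝒮, h𝒮, hcapture, hcard⟩ := lNum_spec fun i => (Y i).sup Encodable.encode
  let pull : (ℕ → Finset ℕ) → ℕ → Finset α := fun S i => (Y i).filter (Encodable.encode · ∈ S i)
  refine ⟨pull '' 𝒮, hcard ▸ mk_image_le, ?_, fun h hY => ?_⟩
  · rintro _ ⟨S, hS, rfl⟩ i
    refine ⟨Finset.filter_subset _ _, (Finset.card_le_card_of_injOn Encodable.encode ?_
      Encodable.encode_injective.injOn).trans (h𝒮 S hS i).2⟩
    intro y hy
    exact (Finset.mem_filter.1 hy).2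
  · obtain ⟨S, hS, hev⟩ := hcapture (Encodable.encode ∘ h)
      (Eventually.of_forall fun i => Finset.le_sup (hY i))
    exact ⟨pull S, mem_image_of_mem _ hS, hev.mono fun i hi => Finset.mem_filter.2 ⟨hY i, hi⟩⟩

theorem StrictMono.exists_block {c : ℕ → ℕ} (hc : StrictMono c) {K j : ℕ} (hK : c K ≤ j) :
    ∃ i, K ≤ i ∧ c i ≤ j ∧ j < c (i + 1) := by
  classical
  have hex : ∃ i, K ≤ i ∧ j < c (i + 1) :=
    ⟨K + j, by omega, Nat.lt_of_lt_of_le (by omega) hc.le_apply⟩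
  refine ⟨Nat.find hex, (Nat.find_spec hex).1, ?_, (Nat.find_spec hex).2⟩
  rcases Nat.eq_or_lt_of_le (Nat.find_spec hex).1 with h | h
  · rwa [← h]
  · have := Nat.find_min hex (m := Nat.find hex - 1) (by omega)
    rw [Nat.sub_add_cancel (by omega)] at this
    omega

theorem StrictMono.block_unique {c : ℕ → ℕ} (hc : StrictMono c) {i i' j : ℕ}
    (hi : c i ≤ j) (hj : j < c (i + 1)) (hi' : c i' ≤ j) (hj' : j < c (i' + 1)) : i = i' := by
  have h₁ := hc.lt_iff_lt.1 (hi.trans_lt hj')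
  have h₂ := hc.lt_iff_lt.1 (hi'.trans_lt hj)
  omega

theorem exists_strictMono_forall_ge {p : ℕ → ℕ → ℕ → Prop}
    (h : ∀ m i, ∀ᶠ j in atTop, p m i j) :
    ∃ c : ℕ → ℕ, StrictMono c ∧ ∀ m i, m ≤ i → ∀ j, c i ≤ j → p m i j := by
  have hev : ∀ i, ∀ᶠ k in atTop, ∀ j, k ≤ j → ∀ m ∈ Finset.range (i + 1), p m i j := fun i =>
    eventually_forall_ge_atTop.2 ((Finset.range (i + 1)).eventually_all.2 fun m _ => h m i)
  obtain ⟨c, hc, hcp⟩ := extraction_forall_of_eventually hev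
  exact ⟨c, hc, fun m i hm j hj => hcp i j hj m (Finset.mem_range.2 (Nat.lt_succ_of_le hm))⟩

def UnionBounded (ψ : Set ℕ → ℝ≥0∞) (Q : Set ℕ) (i : ℕ) (a b : ℝ≥0∞) : Prop :=
  ∀ ℬ : Finset (Set ℕ), ℬ.card ≤ i → (∀ B ∈ ℬ, B ⊆ Q) → (∀ B ∈ ℬ, ψ B ≤ a) →
    ψ (⋃ B ∈ ℬ, B) ≤ b

theorem UnionBounded.biUnion_le {ψ : Set ℕ → ℝ≥0∞} {Q : Set ℕ} {i : ℕ} {a b : ℝ≥0∞}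
    (h : UnionBounded ψ Q i a b) {ι : Type*} (s : Finset ι) (hs : s.card ≤ i) (B : ι → Set ℕ)
    (hBQ : ∀ k ∈ s, B k ⊆ Q) (hBa : ∀ k ∈ s, ψ (B k) ≤ a) : ψ (⋃ k ∈ s, B k) ≤ b := by
  classical
  have := h _ (Finset.card_image_le.trans hs) (by simpa using hBQ) (by simpa using hBa)
  rwa [Finset.set_biUnion_finset_image] at this

namespace BlockCode

variable (P : ℕ → Finset ℕ) (φ : ℕ → Set ℕ → ℝ≥0∞) (c : ℕ → ℕ)

def slice (H : Finset (ℕ × ℕ × ℕ)) (n m : ℕ) : Set ℕ := {x | (n, m, x) ∈ H}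

def box (i : ℕ) : Finset (ℕ × ℕ × ℕ) :=
  Finset.range (i + 1) ×ˢ Finset.range (i + 1) ×ˢ (Finset.Ico (c i) (c (i + 1))).biUnion P

open Classical in
def codes (i : ℕ) : Finset (Finset (ℕ × ℕ × ℕ)) :=
  (box P c i).powerset.filter fun H =>
    ∀ n m j, c i ≤ j → j < c (i + 1) → φ j (slice H n m ∩ P j) ≤ m

open Classical in
def trace (B : ℕ → Set ℕ) (m : ℕ → ℕ) (i : ℕ) : Finset (ℕ × ℕ × ℕ) :=
  (box P c i).filter fun p => p.2.1 = m p.1 ∧ p.2.2 ∈ B p.1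

def slalomUnion (S : ℕ → Finset (Finset (ℕ × ℕ × ℕ))) (n m : ℕ) : Set ℕ :=
  ⋃ i, ⋃ H ∈ S i, slice H n m

variable {P φ c}

theorem mem_box {i n m x : ℕ} :
    (n, m, x) ∈ box P c i ↔ n ≤ i ∧ m ≤ i ∧ ∃ j, c i ≤ j ∧ j < c (i + 1) ∧ x ∈ P j := by
  simp [box, and_assoc]

theorem mem_codes {i : ℕ} {H : Finset (ℕ × ℕ × ℕ)} :
    H ∈ codes P φ c i ↔ H ⊆ box P c i ∧
      ∀ n m j, c i ≤ j → j < c (i + 1) → φ j (slice H n m ∩ P j) ≤ m := by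
  simp [codes]

theorem mem_trace {B : ℕ → Set ℕ} {m : ℕ → ℕ} {i n k x : ℕ} :
    (n, k, x) ∈ trace P c B m i ↔ (n, k, x) ∈ box P c i ∧ k = m n ∧ x ∈ B n := by
  simp [trace]

theorem mem_slalomUnion {S : ℕ → Finset (Finset (ℕ × ℕ × ℕ))} {n m x : ℕ} :
    x ∈ slalomUnion S n m ↔ ∃ i, ∃ H ∈ S i, (n, m, x) ∈ H := by
  simp [slalomUnion, slice]

theorem trace_mem_codes (hφ : ∀ j, IsSubmeasure (φ j)) {B : ℕ → Set ℕ} {m : ℕ → ℕ}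
    (hB : ∀ n j, φ j (B n ∩ P j) ≤ m n) (i : ℕ) : trace P c B m i ∈ codes P φ c i := by
  classical
  refine mem_codes.2 ⟨Finset.filter_subset _ _, fun n k j _ _ => ?_⟩
  obtain ⟨h0, hmono, -⟩ := hφ j
  by_cases hk : k = m n
  · subst hk
    refine (hmono _ _ (inter_subset_inter_left _ fun x hx => ?_)).trans (hB n j)
    exact (mem_trace.1 hx).2.2
  · have : slice (trace P c B m i) n k = ∅ :=
      eq_empty_of_forall_notMem fun x hx => hk (mem_trace.1 hx).2.1
    simp [this, h0]

theorem slalomUnion_inter_le (hPdisj : ∀ j j', j ≠ j' → Disjoint (P j : Set ℕ) (P j'))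
    (hφ : ∀ j, IsSubmeasure (φ j)) (hc : StrictMono c) {f : ℕ → ℕ}
    (hgrad : ∀ m i, m ≤ i → ∀ j, c i ≤ j → UnionBounded (φ j) (P j) i m (f m))
    {S : ℕ → Finset (Finset (ℕ × ℕ × ℕ))} (hS : ∀ i, S i ⊆ codes P φ c i ∧ (S i).card ≤ i)
    (n m j : ℕ) : φ j (slalomUnion S n m ∩ P j) ≤ f m := by
  obtain ⟨h0, hmono, -⟩ := hφ j
  have hblock : ∀ x ∈ slalomUnion S n m ∩ P j,
      ∃ i, m ≤ i ∧ c i ≤ j ∧ j < c (i + 1) ∧ ∃ H ∈ S i, (n, m, x) ∈ H := by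
    rintro x ⟨hx, hxj⟩
    obtain ⟨i, H, hH, hxH⟩ := mem_slalomUnion.1 hx
    obtain ⟨-, hmi, j', hij', hji', hxj'⟩ := mem_box.1 ((mem_codes.1 ((hS i).1 hH)).1 hxH)
    obtain rfl : j' = j := by
      by_contra hne
      exact disjoint_left.1 (hPdisj _ _ hne) hxj' hxj
    exact ⟨i, hmi, hij', hji', H, hH, hxH⟩
  by_cases hj : ∃ i, m ≤ i ∧ c i ≤ j ∧ j < c (i + 1)
  · obtain ⟨i, hmi, hij, hji⟩ := hj
    have hsub : slalomUnion S n m ∩ P j ⊆ ⋃ H ∈ S i, slice H n m ∩ P j := by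
      intro x hx
      obtain ⟨i', -, hi'j, hji', H, hH, hxH⟩ := hblock x hx
      obtain rfl := hc.block_unique hi'j hji' hij hji
      exact mem_biUnion hH ⟨hxH, hx.2⟩
    refine (hmono _ _ hsub).trans ((hgrad m i hmi j hij).biUnion_le (S i) (hS i).2 _
      (fun _ _ => inter_subset_right) fun H hH => ?_)
    exact (mem_codes.1 ((hS i).1 hH)).2 n m j hij hji
  · have : slalomUnion S n m ∩ P j = ∅ := eq_empty_of_forall_notMem fun x hx => by
      obtain ⟨i, hmi, hij, hji, -⟩ := hblock x hx
      exact hj ⟨i, hmi, hij, hji⟩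
    simp [this, h0]

theorem finite_diff_slalomUnion (hPcov : ⋃ j, (P j : Set ℕ) = Set.univ) (hc : StrictMono c)
    {B : ℕ → Set ℕ} {m : ℕ → ℕ} {S : ℕ → Finset (Finset (ℕ × ℕ × ℕ))}
    (hS : ∀ᶠ i in atTop, trace P c B m i ∈ S i) (n : ℕ) :
    (B n \ slalomUnion S n (m n)).Finite := by
  obtain ⟨i₀, hi₀⟩ := eventually_atTop.1 hS
  set K := max i₀ (max n (m n))
  refine ((Finset.range (c K)).biUnion P).finite_toSet.subset fun x ⟨hxB, hxA⟩ => ?_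
  obtain ⟨j, hxj⟩ := mem_iUnion.1 (hPcov.symm ▸ mem_univ x)
  simp only [Finset.coe_biUnion, Finset.coe_range, mem_iUnion, mem_Iio]
  by_contra! hjK
  obtain ⟨i, hKi, hij, hji⟩ := hc.exists_block (le_of_not_gt fun h => hjK j h hxj)
  refine hxA (mem_slalomUnion.2 ⟨i, _, hi₀ i (by omega), mem_trace.2 ⟨mem_box.2 ?_, rfl, hxB⟩⟩)
  exact ⟨by omega, by omega, j, hij, hji, hxj⟩

end BlockCode

open BlockCode in
theorem stmt9_general (I : Set (Set ℕ)) (hGF : GraduallyFragmented I) :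
    sInf (cofStarOmegaFam I) ≤ lNum := by
  obtain ⟨P, φ, f, hPfin, -, hPdisj, hPcov, hφ, hI, hgrad⟩ := hGF
  obtain ⟨P, rfl⟩ : ∃ Q : ℕ → Finset ℕ, (fun j => (Q j : Set ℕ)) = P :=
    ⟨fun j => (hPfin j).toFinset, by simp⟩
  obtain ⟨c, hc, hcgrad⟩ :=
    exists_strictMono_forall_ge (p := fun m i j => UnionBounded (φ j) (P j) i m (f m)) hgrad
  obtain ⟨𝒮, h𝒮card, h𝒮, hcapture⟩ := exists_slaloms_of_finset (codes P φ c)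
  let 𝒜 := (fun S => range fun p : ℕ × ℕ => slalomUnion S p.1 p.2) '' 𝒮
  suffices h𝒜 : #𝒜 ∈ cofStarOmegaFam I from (csInf_le' h𝒜).trans (mk_image_le.trans h𝒮card)
  refine ⟨𝒜, ?_, ?_, rfl⟩
  · rintro _ ⟨S, hS, rfl⟩
    refine ⟨countable_range _, ?_⟩
    rintro _ ⟨⟨n, m⟩, rfl⟩
    refine (hI _).2 ((iSup_le fun j => ?_).trans_lt (ENNReal.natCast_lt_top (f m)))
    exact slalomUnion_inter_le hPdisj hφ hc hcgrad (h𝒮 S hS) n m j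
  · intro B hB
    have hbound (n : ℕ) : ∃ m : ℕ, ∀ j, φ j (B n ∩ P j) ≤ m :=
      let ⟨m, hm⟩ := ENNReal.exists_nat_gt ((hI _).1 (hB n)).ne
      ⟨m, fun j => (le_iSup (fun j => φ j (B n ∩ P j)) j).trans hm.le⟩
    choose m hm using hbound
    obtain ⟨S, hS, hev⟩ := hcapture (trace P c B m) (trace_mem_codes hφ hm)
    exact ⟨_, ⟨S, hS, rfl⟩, fun n => ⟨_, ⟨(n, m n), rfl⟩, finite_diff_slalomUnion hPcov hc hev n⟩⟩

/-- For every gradually fragmented ideal `I` on `ω`, `cof*_ω(I) ≤ 𝔩`. -/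
theorem stmt9 (I : Set (Set ℕ)) (hI : IsIdealOn I) (hGF : GraduallyFragmented I) :
    sInf (cofStarOmegaFam I) ≤ lNum :=
  stmt9_general I hGF

end
end

section
/- For all ideals I, J on countable sets, non*_ω(I⊗J) = max{𝔡, non*_ω(I), non*_ω(J)}, where I⊗J is the Fubini product. In particular non*_ω(Fin⊗Fin) = 𝔡. -/
open Cardinal Filter Set
open scoped ENNReal

noncomputable section

/-!
Lower bound. Let `𝒜` witness `non*_ω(I ⊗ J)`. Columns `{x} × Y` and rows `X × {y}` lie in
`I ⊗ J`, so every `A ∈ 𝒜` meets them finitely; hence the projections of the members of `𝒜`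
witness `non*_ω(I)` and `non*_ω(J)`. For a monotone `g`, the region below the graph of `g`
also lies in `I ⊗ J`, so some `A ∈ 𝒜` almost avoids it together with all columns; then the
least height of a point of `A` right of column `n` eventually exceeds `g n`, and these
height functions form a dominating family.

Upper bound. Enumerate `A ∈ 𝒜_I`, `A' ∈ 𝒜_J` as `(x k)`, `(y j)` and take, for `f` in a
dominating family, the graph `{(x k, y (f k))}`. Given countably many `B ∈ I ⊗ J`, choose `A`
almost disjoint from their sets of `J`-positive sections and `A'` almost disjoint from all
their `J`-small sections. The pullbacks `{(k, j) | (x k, y j) ∈ B}` then lie in `Fin ⊗ Fin`,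
and a dominating `f` eventually jumps over their finite sections.
-/

section Ideals

variable {X : Type} {I : Set (Set X)}

namespace IsIdealOn

lemma empty_mem (hI : IsIdealOn I) : ∅ ∈ I := hI.finite_mem finite_empty

lemma biUnion_finset_mem {ι : Type*} (hI : IsIdealOn I) {B : ι → Set X} (s : Finset ι)
    (hB : ∀ i ∈ s, B i ∈ I) : (⋃ i ∈ s, B i) ∈ I := by
  classical
  induction s using Finset.induction_on with
  | empty => simpa using hI.empty_mem
  | insert a s _ ih =>
    rw [Finset.set_biUnion_insert]
    exact hI.union_mem (hB a (Finset.mem_insert_self a s))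
      (ih fun i hi => hB i (Finset.mem_insert_of_mem hi))

lemma compl_infinite (hI : IsIdealOn I) {A : Set X} (hA : A ∈ I) : Aᶜ.Infinite := fun hfin =>
  hI.proper (by simpa using hI.union_mem hA (hI.finite_mem hfin))

end IsIdealOn

lemma Set.Infinite.exists_le_of_injective {s : Set X} (hs : s.Infinite) {e : X → ℕ}
    (he : Function.Injective e) (n : ℕ) : ∃ x ∈ s, n ≤ e x := by
  obtain ⟨_, ⟨x, hx, rfl⟩, hlt⟩ := (hs.image he.injOn).exists_gt n
  exact ⟨x, hx, hlt.le⟩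

lemma Set.Infinite.exists_injective_range_subset {s : Set X} (hs : s.Infinite) :
    ∃ x : ℕ → X, Function.Injective x ∧ range x ⊆ s :=
  ⟨_, Subtype.val_injective.comp (hs.natEmbedding s).injective,
    range_subset_iff.2 fun k => (hs.natEmbedding s k).2⟩

lemma IsIdealOn.exists_infinite_finite_inter [Countable X] (hI : IsIdealOn I) {B : ℕ → Set X}
    (hB : ∀ n, B n ∈ I) : ∃ A : Set X, A.Infinite ∧ ∀ n, (A ∩ B n).Finite := by
  obtain ⟨e, he⟩ := exists_injective_nat X
  have hU n : (⋃ i ∈ Finset.range (n + 1), B i) ∈ I := hI.biUnion_finset_mem _ fun i _ => hB i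
  choose a ha hea using fun n => (hI.compl_infinite (hU n)).exists_le_of_injective he n
  refine ⟨range a, fun hfin => ?_, fun n => ((finite_Iic n).image a).subset ?_⟩
  · obtain ⟨N, hN⟩ := (hfin.image e).bddAbove
    have := hN (mem_image_of_mem e (mem_range_self (N + 1)))
    have := hea (N + 1)
    omega
  · rintro _ ⟨⟨m, rfl⟩, hm⟩
    refine ⟨m, ?_, rfl⟩
    by_contra hmn
    exact ha m (mem_iUnion₂.2 ⟨n, Finset.mem_range.2 (Nat.lt_succ_of_lt (not_le.1 hmn)), hm⟩)

lemma isIdealOn_finIdeal [Infinite X] : IsIdealOn (finIdeal X) where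
  subset_mem _ _ hAB hB := Finite.subset hB hAB
  union_mem _ _ hA hB := Finite.union hA hB
  finite_mem _ hA := hA
  proper := infinite_univ

end Ideals

section Witness

variable {X : Type} {I : Set (Set X)}

def IsNonStarOmegaWitness (I 𝒜 : Set (Set X)) : Prop :=
  (∀ A ∈ 𝒜, A.Infinite) ∧
    ∀ ℬ : Set (Set X), ℬ.Countable → ℬ ⊆ I →
      ∃ A ∈ 𝒜, ∀ B ∈ ℬ, (A ∩ B).Finite

lemma mem_nonStarOmegaFam_iff (hI : IsIdealOn I) {c : Cardinal} :
    c ∈ nonStarOmegaFam I ↔ ∃ 𝒜, IsNonStarOmegaWitness I 𝒜 ∧ #𝒜 = c := by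
  constructor
  · rintro ⟨𝒜, hinf, hseq, rfl⟩
    refine ⟨𝒜, ⟨hinf, fun ℬ hc hℬ => ?_⟩, rfl⟩
    obtain ⟨B, hB⟩ := (hc.insert ∅).exists_eq_range (insert_nonempty _ _)
    have hBI n : B n ∈ I := by
      have : B n ∈ insert ∅ ℬ := hB ▸ mem_range_self n
      exact this.elim (fun h => h ▸ hI.empty_mem) fun h => hℬ h
    obtain ⟨A, hA, hfin⟩ := hseq B hBI
    refine ⟨A, hA, fun C hC => ?_⟩
    obtain ⟨n, rfl⟩ : C ∈ range B := hB ▸ mem_insert_of_mem _ hC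
    exact hfin n
  · rintro ⟨𝒜, ⟨hinf, hcount⟩, rfl⟩
    refine ⟨𝒜, hinf, fun B hB => ?_, rfl⟩
    obtain ⟨A, hA, hfin⟩ := hcount (range B) (countable_range B) (range_subset_iff.2 hB)
    exact ⟨A, hA, fun n => hfin _ (mem_range_self n)⟩

lemma sInf_nonStarOmegaFam_le (hI : IsIdealOn I) {𝒜 : Set (Set X)}
    (h : IsNonStarOmegaWitness I 𝒜) : sInf (nonStarOmegaFam I) ≤ #𝒜 :=
  csInf_le' ((mem_nonStarOmegaFam_iff hI).2 ⟨𝒜, h, rfl⟩)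

lemma exists_isNonStarOmegaWitness_mk_eq [Countable X] (hI : IsIdealOn I) :
    ∃ 𝒜, IsNonStarOmegaWitness I 𝒜 ∧ #𝒜 = sInf (nonStarOmegaFam I) := by
  refine (mem_nonStarOmegaFam_iff hI).1 (csInf_mem ⟨_, {A | A.Infinite}, fun A hA => hA,
    fun B hB => ?_, rfl⟩)
  obtain ⟨A, hA, hfin⟩ := hI.exists_infinite_finite_inter hB
  exact ⟨A, hA, hfin⟩

lemma IsNonStarOmegaWitness.image {Z : Type} [Countable Z] {L : Set (Set Z)}
    {𝒜 : Set (Set X)} (h : IsNonStarOmegaWitness I 𝒜) (f : X → Z)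
    (hpre : ∀ B ∈ L, f ⁻¹' B ∈ I) (hfiber : ∀ z, f ⁻¹' {z} ∈ I) :
    IsNonStarOmegaWitness L (image f '' 𝒜 ∩ {S | S.Infinite}) := by
  refine ⟨fun S hS => hS.2, fun ℬ hc hℬ => ?_⟩
  obtain ⟨A, hA, hfin⟩ := h.2 (preimage f '' ℬ ∪ range fun z => f ⁻¹' {z})
    ((hc.image _).union (countable_range _))
    (union_subset (image_subset_iff.2 fun B hB => hpre B (hℬ hB)) (range_subset_iff.2 hfiber))
  have himage : (f '' A).Infinite := fun himage =>
    h.1 A hA (himage.of_finite_fibers f fun z _ => hfin _ (Or.inr (mem_range_self z)))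
  refine ⟨f '' A, ⟨mem_image_of_mem _ hA, himage⟩, fun B hB => ?_⟩
  rw [← image_inter_preimage]
  exact (hfin _ (Or.inl (mem_image_of_mem _ hB))).image f

end Witness

section Fubini

variable {X Y : Type} {I : Set (Set X)} {J : Set (Set Y)}

lemma mem_fubini_of_forall_mem (hI : IsIdealOn I) {A : Set (X × Y)}
    (hA : ∀ x, {y | (x, y) ∈ A} ∈ J) : A ∈ Fubini I J := by
  simpa [Fubini, hA] using hI.empty_mem

lemma preimage_fst_mem_fubini (hI : IsIdealOn I) (hJ : IsIdealOn J) {B : Set X} (hB : B ∈ I) :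
    Prod.fst ⁻¹' B ∈ Fubini I J :=
  hI.subset_mem (fun x hx => by_contra fun hxB => hx (by simpa [hxB] using hJ.empty_mem)) hB

lemma preimage_snd_mem_fubini (hI : IsIdealOn I) {C : Set Y} (hC : C ∈ J) :
    Prod.snd ⁻¹' C ∈ Fubini I J :=
  mem_fubini_of_forall_mem hI fun _ => hC

lemma IsIdealOn.fubini (hI : IsIdealOn I) (hJ : IsIdealOn J) : IsIdealOn (Fubini I J) where
  subset_mem _ _ hAB hB :=
    hI.subset_mem (fun _ hx hA => hx (hJ.subset_mem (fun _ hy => hAB hy) hA)) hB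
  union_mem A B hA hB := by
    refine hI.subset_mem (fun x hx => ?_) (hI.union_mem hA hB)
    by_contra h
    simp only [mem_union, mem_ofPred_eq, not_or, not_not] at h
    exact hx (hJ.union_mem h.1 h.2)
  finite_mem A hA := mem_fubini_of_forall_mem hI fun x =>
    hJ.finite_mem ((hA.image Prod.snd).subset fun y hy => ⟨(x, y), hy, rfl⟩)
  proper h := hI.proper (by simpa [Fubini, hJ.proper] using h)

lemma sInf_nonStarOmegaFam_le_of_fubini_left [Countable X] (hI : IsIdealOn I)
    (hJ : IsIdealOn J) {𝒜 : Set (Set (X × Y))} (h : IsNonStarOmegaWitness (Fubini I J) 𝒜) :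
    sInf (nonStarOmegaFam I) ≤ #𝒜 :=
  (sInf_nonStarOmegaFam_le hI (h.image Prod.fst (fun _ hB => preimage_fst_mem_fubini hI hJ hB)
    fun x => preimage_fst_mem_fubini hI hJ (hI.finite_mem (finite_singleton x)))).trans
    ((mk_le_mk_of_subset inter_subset_left).trans mk_image_le)

lemma sInf_nonStarOmegaFam_le_of_fubini_right [Countable Y] (hI : IsIdealOn I)
    (hJ : IsIdealOn J) {𝒜 : Set (Set (X × Y))} (h : IsNonStarOmegaWitness (Fubini I J) 𝒜) :
    sInf (nonStarOmegaFam J) ≤ #𝒜 :=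
  (sInf_nonStarOmegaFam_le hJ (h.image Prod.snd (fun _ hC => preimage_snd_mem_fubini hI hC)
    fun y => preimage_snd_mem_fubini hI (hJ.finite_mem (finite_singleton y)))).trans
    ((mk_le_mk_of_subset inter_subset_left).trans mk_image_le)

end Fubini

section Dominating

def IsDominatingFamily (D : Set (ℕ → ℕ)) : Prop := ∀ f, ∃ g ∈ D, LeStar f g

lemma dNum_le_mk {D : Set (ℕ → ℕ)} (hD : IsDominatingFamily D) : dNum ≤ #D :=
  csInf_le' ⟨D, hD, rfl⟩

lemma exists_isDominatingFamily_mk_eq_dNum : ∃ D, IsDominatingFamily D ∧ #D = dNum :=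
  csInf_mem (s := {c | ∃ D, IsDominatingFamily D ∧ #D = c})
    ⟨_, univ, fun f => ⟨f, mem_univ f, Eventually.of_forall fun _ => le_rfl⟩, rfl⟩

lemma aleph0_le_dNum : ℵ₀ ≤ dNum := by
  obtain ⟨D, hD, hmk⟩ := exists_isDominatingFamily_mk_eq_dNum
  rw [← hmk, ← Cardinal.infinite_iff, infinite_coe_iff]
  intro hfin
  obtain ⟨g, hg, hle⟩ := hD fun n => ∑ h ∈ hfin.toFinset, h n + 1
  obtain ⟨n, hn⟩ := hle.exists
  change ∑ h ∈ hfin.toFinset, h n + 1 ≤ g n at hn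
  have := Finset.single_le_sum (f := fun h : ℕ → ℕ => h n) (fun _ _ => Nat.zero_le _)
    (hfin.mem_toFinset.2 hg)
  omega

lemma IsDominatingFamily.exists_mem_finite_graph_inter {D : Set (ℕ → ℕ)}
    (hD : IsDominatingFamily D) {𝒞 : Set (Set (ℕ × ℕ))} (hc : 𝒞.Countable)
    (h𝒞 : 𝒞 ⊆ Fubini (finIdeal ℕ) (finIdeal ℕ)) :
    ∃ f ∈ D, ∀ C ∈ 𝒞, {k | (k, f k) ∈ C}.Finite := by
  have : Countable 𝒞 := hc.to_subtype
  obtain ⟨e, he⟩ := exists_injective_nat 𝒞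
  have hbound (C : 𝒞) (k : ℕ) :
      ∃ b, {j | (k, j) ∈ C.1}.Finite → ∀ j, (k, j) ∈ C.1 → j < b := by
    by_cases hfin : {j | (k, j) ∈ C.1}.Finite
    · obtain ⟨b, hb⟩ := hfin.bddAbove
      exact ⟨b + 1, fun _ j hj => Nat.lt_succ_of_le (hb hj)⟩
    · exact ⟨0, fun h => absurd h hfin⟩
  choose b hb using hbound
  have hlevel (k : ℕ) : {C | e C ≤ k}.Finite := (finite_Iic k).preimage he.injOn
  -- at column `k`, `f` has to clear the sections of the finitely many `C` with `e C ≤ k`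
  obtain ⟨f, hfD, hf⟩ := hD fun k => ∑ C ∈ (hlevel k).toFinset, b C k
  refine ⟨f, hfD, fun C hC => ?_⟩
  have hsec : ∀ᶠ k in atTop, {j | (k, j) ∈ C}.Finite :=
    Nat.cofinite_eq_atTop ▸ eventually_cofinite.2 (h𝒞 hC)
  have hmiss : ∀ᶠ k in atTop, (k, f k) ∉ C := by
    filter_upwards [hsec, (hf : ∀ᶠ k in atTop, _ ≤ f k), eventually_ge_atTop (e ⟨C, hC⟩)]
      with k hfin hle hk hmem
    have := Finset.single_le_sum (f := fun C => b C k) (fun _ _ => Nat.zero_le _)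
      ((hlevel k).mem_toFinset.2 hk)
    exact (hb ⟨C, hC⟩ k hfin (f k) hmem).not_ge (this.trans hle)
  exact (eventually_cofinite.1 (Nat.cofinite_eq_atTop ▸ hmiss)).subset
    fun _ hk => not_not_intro hk

end Dominating

section Fubini

variable {X Y : Type} {I : Set (Set X)} {J : Set (Set Y)}

lemma dNum_le_mk_of_fubini [Countable X] [Countable Y] (hI : IsIdealOn I) (hJ : IsIdealOn J)
    {𝒜 : Set (Set (X × Y))} (hw : IsNonStarOmegaWitness (Fubini I J) 𝒜) :
    dNum ≤ #𝒜 := by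
  obtain ⟨eX, heX⟩ := exists_injective_nat X
  obtain ⟨eY, heY⟩ := exists_injective_nat Y
  let height : Set (X × Y) → ℕ → ℕ := fun A n =>
    sInf ((fun p => eY p.2) '' {p ∈ A | n ≤ eX p.1})
  suffices hdom : ∀ f, ∃ A ∈ 𝒜, LeStar f (height A) by
    refine (dNum_le_mk (D := height '' 𝒜) fun f => ?_).trans mk_image_le
    obtain ⟨A, hA, hf⟩ := hdom f
    exact ⟨_, mem_image_of_mem height hA, hf⟩
  intro f
  let g : ℕ → ℕ := fun n => ∑ i ∈ Finset.range (n + 1), f i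
  have hg_mono : Monotone g := fun a b hab =>
    Finset.sum_le_sum_of_subset (Finset.range_subset_range.2 (by omega))
  have hfg n : f n ≤ g n :=
    Finset.single_le_sum (fun _ _ => Nat.zero_le _) (Finset.self_mem_range_succ n)
  let below : Set (X × Y) := {p | eY p.2 ≤ g (eX p.1)}
  have hbelow : below ∈ Fubini I J := mem_fubini_of_forall_mem hI fun x =>
    hJ.finite_mem (show (eY ⁻¹' Iic (g (eX x))).Finite from (finite_Iic _).preimage heY.injOn)
  obtain ⟨A, hA, hfin⟩ := hw.2 (insert below (range fun x => Prod.fst ⁻¹' {x}))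
    ((countable_range _).insert below) (insert_subset hbelow (range_subset_iff.2 fun x =>
      preimage_fst_mem_fubini hI hJ (hI.finite_mem (finite_singleton x))))
  have hproj : (Prod.fst '' A).Infinite := fun hproj => hw.1 A hA
    (hproj.of_finite_fibers _ fun x _ => hfin _ (mem_insert_of_mem _ (mem_range_self x)))
  obtain ⟨N, hN⟩ := ((hfin below (mem_insert below _)).image fun p => eX p.1).bddAbove
  refine ⟨A, hA, eventually_atTop.2 ⟨N + 1, fun n hn => ?_⟩⟩
  obtain ⟨_, ⟨p, hpA, rfl⟩, hnp⟩ := hproj.exists_le_of_injective heX n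
  obtain ⟨q, ⟨hqA, hnq⟩, hq⟩ :=
    Nat.sInf_mem (s := (fun p => eY p.2) '' {p ∈ A | n ≤ eX p.1})
      ⟨_, p, ⟨hpA, hnp⟩, rfl⟩
  have hq_above : g (eX q.1) < eY q.2 := by
    by_contra hq_below
    have := hN (mem_image_of_mem _ ⟨hqA, not_lt.1 hq_below⟩)
    omega
  calc f n ≤ g n := hfg n
    _ ≤ g (eX q.1) := hg_mono hnq
    _ ≤ height A n := hq_above.le.trans_eq hq

lemma preimage_prodMap_mem_fubini_finIdeal {x : ℕ → X} (hx : Function.Injective x)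
    {y : ℕ → Y} (hy : Function.Injective y) {B : Set (X × Y)}
    (hpos : (range x ∩ {a | {b | (a, b) ∈ B} ∉ J}).Finite)
    (hsmall : ∀ a, {b | (a, b) ∈ B} ∈ J → (range y ∩ {b | (a, b) ∈ B}).Finite) :
    Prod.map x y ⁻¹' B ∈ Fubini (finIdeal ℕ) (finIdeal ℕ) := by
  refine (hpos.preimage hx.injOn).subset fun k hk => ⟨mem_range_self k, fun hJk => hk ?_⟩
  exact ((hsmall _ hJk).preimage hy.injOn).subset fun j hj => ⟨mem_range_self j, hj⟩

lemma isNonStarOmegaWitness_fubini_graphs [Countable X]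
    {𝒜I : Set (Set X)} (hAI : IsNonStarOmegaWitness I 𝒜I)
    {𝒜J : Set (Set Y)} (hAJ : IsNonStarOmegaWitness J 𝒜J)
    {D : Set (ℕ → ℕ)} (hD : IsDominatingFamily D)
    {x : 𝒜I → ℕ → X} (hx : ∀ A, Function.Injective (x A))
    (hxA : ∀ A, range (x A) ⊆ A)
    {y : 𝒜J → ℕ → Y} (hy : ∀ A, Function.Injective (y A))
    (hyA : ∀ A, range (y A) ⊆ A) :
    IsNonStarOmegaWitness (Fubini I J)
      (range fun t : 𝒜I × 𝒜J × D => range fun k => (x t.1 k, y t.2.1 (t.2.2.1 k))) := by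
  refine ⟨?_, fun ℬ hc hℬ => ?_⟩
  · rintro _ ⟨t, rfl⟩
    exact infinite_range_of_injective fun k l hkl => hx t.1 (congrArg Prod.fst hkl)
  let pos : Set (X × Y) → Set X := fun B => {a | {b | (a, b) ∈ B} ∉ J}
  obtain ⟨A, hA, hApos⟩ :=
    hAI.2 (pos '' ℬ) (hc.image pos) (image_subset_iff.2 fun B hB => hℬ hB)
  let small : Set (Set Y) :=
    ⋃ B ∈ ℬ, (fun a => {b | (a, b) ∈ B}) '' {a | {b | (a, b) ∈ B} ∈ J}
  obtain ⟨A', hA', hA'small⟩ := hAJ.2 small (hc.biUnion fun B _ => (to_countable _).image _)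
    (iUnion₂_subset fun B _ => image_subset_iff.2 fun a ha => ha)
  obtain ⟨f, hf, hfin⟩ := hD.exists_mem_finite_graph_inter
    (hc.image (preimage (Prod.map (x ⟨A, hA⟩) (y ⟨A', hA'⟩))))
    (image_subset_iff.2 fun B hB => preimage_prodMap_mem_fubini_finIdeal (hx _) (hy _)
      ((hApos _ (mem_image_of_mem pos hB)).subset (inter_subset_inter_left _ (hxA _)))
      fun a ha => (hA'small _ (mem_iUnion₂.2 ⟨B, hB, a, ha, rfl⟩)).subset
        (inter_subset_inter_left _ (hyA _)))
  refine ⟨_, mem_range_self (⟨A, hA⟩, ⟨A', hA'⟩, ⟨f, hf⟩), fun B hB => ?_⟩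
  refine ((hfin _ (mem_image_of_mem _ hB)).image
    fun k => (x ⟨A, hA⟩ k, y ⟨A', hA'⟩ (f k))).subset ?_
  rintro _ ⟨⟨k, rfl⟩, hk⟩
  exact ⟨k, hk, rfl⟩

lemma sInf_nonStarOmegaFam_fubini_le [Countable X] (hI : IsIdealOn I) (hJ : IsIdealOn J)
    {𝒜I : Set (Set X)} (hAI : IsNonStarOmegaWitness I 𝒜I)
    {𝒜J : Set (Set Y)} (hAJ : IsNonStarOmegaWitness J 𝒜J)
    {D : Set (ℕ → ℕ)} (hD : IsDominatingFamily D) :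
    sInf (nonStarOmegaFam (Fubini I J)) ≤ #𝒜I * (#𝒜J * #D) := by
  choose x hx hxA using fun A : 𝒜I => (hAI.1 A A.2).exists_injective_range_subset
  choose y hy hyA using fun A : 𝒜J => (hAJ.1 A A.2).exists_injective_range_subset
  calc sInf (nonStarOmegaFam (Fubini I J))
      ≤ #(range fun t : 𝒜I × 𝒜J × D => range fun k => (x t.1 k, y t.2.1 (t.2.2.1 k))) :=
        sInf_nonStarOmegaFam_le (hI.fubini hJ)
          (isNonStarOmegaWitness_fubini_graphs hAI hAJ hD hx hxA hy hyA)
    _ ≤ #(𝒜I × 𝒜J × D) := mk_range_le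
    _ = #𝒜I * (#𝒜J * #D) := by simp only [mk_prod, lift_id]

lemma sInf_nonStarOmegaFam_fubini [Countable X] [Countable Y] (hI : IsIdealOn I)
    (hJ : IsIdealOn J) : sInf (nonStarOmegaFam (Fubini I J)) =
      max dNum (max (sInf (nonStarOmegaFam I)) (sInf (nonStarOmegaFam J))) := by
  apply le_antisymm
  · obtain ⟨𝒜I, hAI, hmkI⟩ := exists_isNonStarOmegaWitness_mk_eq hI
    obtain ⟨𝒜J, hAJ, hmkJ⟩ := exists_isNonStarOmegaWitness_mk_eq hJ
    obtain ⟨D, hD, hmkD⟩ := exists_isDominatingFamily_mk_eq_dNum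
    set M := max dNum (max (sInf (nonStarOmegaFam I)) (sInf (nonStarOmegaFam J)))
    have hM : ℵ₀ ≤ M := aleph0_le_dNum.trans (le_max_left _ _)
    calc sInf (nonStarOmegaFam (Fubini I J)) ≤ #𝒜I * (#𝒜J * #D) :=
          sInf_nonStarOmegaFam_fubini_le hI hJ hAI hAJ hD
      _ ≤ M * (M * M) := by
          rw [hmkI, hmkJ, hmkD]
          gcongr
          exacts [(le_max_left _ _).trans (le_max_right _ _),
            (le_max_right _ _).trans (le_max_right _ _), le_max_left _ _]
      _ = M := by rw [mul_eq_self hM, mul_eq_self hM]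
  · obtain ⟨𝒜, hw, hmk⟩ := exists_isNonStarOmegaWitness_mk_eq (hI.fubini hJ)
    rw [← hmk]
    exact max_le (dNum_le_mk_of_fubini hI hJ hw) (max_le
      (sInf_nonStarOmegaFam_le_of_fubini_left hI hJ hw)
      (sInf_nonStarOmegaFam_le_of_fubini_right hI hJ hw))

end Fubini

lemma sInf_nonStarOmegaFam_finIdeal_le_one {X : Type} [Infinite X] :
    sInf (nonStarOmegaFam (finIdeal X)) ≤ 1 := by
  refine (sInf_nonStarOmegaFam_le isIdealOn_finIdeal (𝒜 := {Set.univ}) ⟨?_, ?_⟩).trans_eq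
    (mk_singleton _)
  · simpa using infinite_univ
  · exact fun ℬ _ hℬ => ⟨Set.univ, rfl, fun B hB => by rw [univ_inter]; exact hℬ hB⟩

/-- `non*_ω(I ⊗ J) = max {𝔡, non*_ω(I), non*_ω(J)}`; in particular
`non*_ω(Fin ⊗ Fin) = 𝔡`. -/
theorem stmt10 :
    (∀ (X Y : Type) (_ : Countable X) (_ : Countable Y)
      (I : Set (Set X)) (J : Set (Set Y)), IsIdealOn I → IsIdealOn J →
      sInf (nonStarOmegaFam (Fubini I J)) =
        max dNum (max (sInf (nonStarOmegaFam I)) (sInf (nonStarOmegaFam J)))) ∧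
    sInf (nonStarOmegaFam (Fubini (finIdeal ℕ) (finIdeal ℕ))) = dNum := by
  refine ⟨fun X Y _ _ I J hI hJ => sInf_nonStarOmegaFam_fubini hI hJ, ?_⟩
  have hfin : sInf (nonStarOmegaFam (finIdeal ℕ)) ≤ dNum :=
    sInf_nonStarOmegaFam_finIdeal_le_one.trans (one_lt_aleph0.le.trans aleph0_le_dNum)
  rw [sInf_nonStarOmegaFam_fubini isIdealOn_finIdeal isIdealOn_finIdeal,
    max_eq_left (max_le hfin hfin)]
end
end

section
/- For every F_σ ideal I on ω, non*_ω(I) ≤ 𝔩. -/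
open Cardinal Filter Set
open scoped ENNReal

noncomputable section

/-!
Write `I = ⋃ₙ Cₙ` with every `Cₙ` closed in `2^ω`, and let `Lₖ` consist of the sets covered by
a single point of `C₀ ∪ ⋯ ∪ Cₖ`. Unions of `k`-tuples of such points form a compact set of members
of `I`, all of them co-infinite; by compactness, any `k` members of `Lₖ` miss a common
point of a finite interval `[a, N)`. This gives intervals `Jₖ = [mₖ, mₖ₊₁)`.

Every countable `{Bₙ} ⊆ I` is eventually covered by a single sequence `Fₖ ∈ Lₖ`, and the
traces `Fₖ ∩ [0, mₖ₊₁)` range over finite sets, so `𝔩` slaloms of width `k` localize all such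
sequences. For each slalom `S` pick `aₖ ∈ Jₖ` outside the at most `k` members of `Lₖ` in `S k`;
then `{aₖ}` meets each `Bₙ ⊆ Fₖ` in only finitely many points.
-/

namespace IsIdealOn

variable {X : Type} {I : Set (Set X)}

theorem biUnion_mem (hI : IsIdealOn I) {ι : Type*} (s : Finset ι) {A : ι → Set X}
    (hA : ∀ i ∈ s, A i ∈ I) : ⋃ i ∈ s, A i ∈ I := by
  classical
  induction s using Finset.induction_on with
  | empty => simpa using hI.finite_mem finite_empty
  | insert i s _ ih =>
    rw [Finset.set_biUnion_insert]
    exact hI.union_mem (hA i (Finset.mem_insert_self i s))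
      (ih fun j hj => hA j (Finset.mem_insert_of_mem hj))

theorem iUnion_mem (hI : IsIdealOn I) {ι : Type*} [Finite ι] {A : ι → Set X}
    (hA : ∀ i, A i ∈ I) : ⋃ i, A i ∈ I := by
  cases nonempty_fintype ι
  simpa using hI.biUnion_mem Finset.univ fun i _ => hA i

theorem accumulate_mem (hI : IsIdealOn I) {A : ℕ → Set X} (hA : ∀ n, A n ∈ I) (n : ℕ) :
    accumulate A n ∈ I := by
  simpa [accumulate_eq_biInter_lt] using hI.biUnion_mem (Finset.range (n + 1)) fun i _ => hA i

end IsIdealOn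

theorem IsIdealOn.exists_ge_notMem {I : Set (Set ℕ)} (hI : IsIdealOn I) {A : Set ℕ}
    (hA : A ∈ I) (a : ℕ) : ∃ j ≥ a, j ∉ A := by
  by_contra! h
  apply hI.proper
  rw [← Iio_union_Ici (a := a)]
  exact hI.union_mem (hI.finite_mem (finite_Iio a)) (hI.subset_mem h hA)

theorem exists_gap_of_isCompact {K : Set (ℕ → Bool)} (hK : IsCompact K) {a : ℕ}
    (h : ∀ x ∈ K, ∃ j ≥ a, x j = false) :
    ∃ N, ∀ x ∈ K, ∃ j ∈ Ico a N, x j = false := by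
  let W : ℕ → Set (ℕ → Bool) := fun N => ⋃ j ∈ Ico a N, {x | x j = false}
  have hW_open (N : ℕ) : IsOpen (W N) := isOpen_biUnion fun j _ =>
    (continuous_apply (A := fun _ : ℕ => Bool) j).isOpen_preimage {false} (isOpen_discrete _)
  have hW_mono : Monotone W := fun N N' hN =>
    biUnion_subset_biUnion_left (Ico_subset_Ico_right hN)
  have hKW : K ⊆ ⋃ N, W N := fun x hx => by
    obtain ⟨j, hja, hj⟩ := h x hx
    exact mem_iUnion.2 ⟨j + 1, mem_biUnion ⟨hja, j.lt_succ_self⟩ hj⟩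
  obtain ⟨N, hN⟩ := hK.elim_directed_cover W hW_open hKW hW_mono.directed_le
  exact ⟨N, fun x hx => by simpa [W] using hN hx⟩

structure GappedExhaustion (I : Set (Set ℕ)) (L : ℕ → Set (Set ℕ)) : Prop where
  mono : Monotone L
  mem_of_subset : ∀ {k : ℕ} {A B : Set ℕ}, A ⊆ B → B ∈ L k → A ∈ L k
  exists_mem : ∀ A ∈ I, ∃ k, A ∈ L k
  exists_gap : ∀ k a : ℕ, ∃ N, ∀ s : Finset (Set ℕ), s.card ≤ k →
    (∀ A ∈ s, A ∈ L k) → ∃ j ∈ Ico a N, ∀ A ∈ s, j ∉ A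

theorem IsIdealOn.exists_common_gap_of_isClosed {I : Set (Set ℕ)} (hI : IsIdealOn I)
    {P : Set (ℕ → Bool)} (hP : IsClosed P) (hbot : ⊥ ∈ P)
    (hPI : ∀ x ∈ P, {n | x n = true} ∈ I) (k a : ℕ) :
    ∃ N, ∀ s : Finset (Set ℕ), s.card ≤ k →
      (∀ A ∈ s, ∃ x ∈ P, ∀ n ∈ A, x n = true) → ∃ j ∈ Ico a N, ∀ A ∈ s, j ∉ A := by
  let bor : (Fin k → ℕ → Bool) → ℕ → Bool := fun y j => decide (∃ t, y t j = true)
  have hbor : Continuous bor := continuous_pi fun j =>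
    (continuous_of_discreteTopology (f := fun z : Fin k → Bool => decide (∃ t, z t = true))).comp
      (continuous_pi fun t => (continuous_apply j).comp (continuous_apply t))
  have hK : IsCompact (bor '' univ.pi fun _ => P) :=
    (isCompact_univ_pi fun _ => hP.isCompact).image hbor
  obtain ⟨N, hN⟩ := exists_gap_of_isCompact hK (a := a) <| by
    rintro _ ⟨y, hy, rfl⟩
    have : {n | bor y n = true} ∈ I := by
      simpa [bor, ofPred_exists] using hI.iUnion_mem fun t => hPI _ (hy t trivial)
    simpa [bor] using hI.exists_ge_notMem this a
  refine ⟨N, fun s hs hsP => ?_⟩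
  choose! x hxP hx using hsP
  -- pad the `≤ k` covering points to a `k`-tuple with `⊥`
  let e : s ↪ Fin k := s.equivFin.toEmbedding.trans (Fin.castLEEmb hs)
  let y : Fin k → ℕ → Bool := Function.extend e (fun A => x A) ⊥
  have hyP (t : Fin k) : y t ∈ P := by
    by_cases ht : ∃ A, e A = t
    · obtain ⟨A, rfl⟩ := ht
      simpa [y, e.injective.extend_apply] using hxP A A.2
    · simpa [y, Function.extend_apply' _ _ _ ht] using hbot
  obtain ⟨j, hj, hyj⟩ := hN (bor y) ⟨y, fun t _ => hyP t, rfl⟩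
  refine ⟨j, hj, fun A hA hjA => ?_⟩
  have hyA : y (e ⟨A, hA⟩) j = true := by
    simpa [y, e.injective.extend_apply] using hx A hA j hjA
  simp only [bor, decide_eq_false_iff_not, not_exists] at hyj
  exact hyj _ hyA

theorem chiSet_setOf (x : ℕ → Bool) : chiSet {n | x n = true} = x := by
  funext n
  simp [chiSet]

theorem exists_gappedExhaustion {I : Set (Set ℕ)} (hI : IsIdealOn I) (hF : IsFSigmaIdeal I) :
    ∃ L, GappedExhaustion I L := by
  obtain ⟨C, hC_closed, hC⟩ := hF
  let P : ℕ → Set (ℕ → Bool) := fun k => insert ⊥ (⋃ i ≤ k, C i)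
  have hP_closed (k : ℕ) : IsClosed (P k) :=
    isClosed_singleton.union ((finite_le_nat k).isClosed_biUnion fun i _ => hC_closed i)
  have hPI (k : ℕ) : ∀ x ∈ P k, {n | x n = true} ∈ I := by
    rintro x (rfl | hx)
    · simpa using hI.finite_mem finite_empty
    · obtain ⟨i, -, hi⟩ := mem_iUnion₂.1 hx
      rw [hC, chiSet_setOf]
      exact mem_iUnion_of_mem i hi
  refine ⟨fun k => {A | ∃ x ∈ P k, ∀ n ∈ A, x n = true}, ?_, ?_, ?_,
    fun k a => hI.exists_common_gap_of_isClosed (hP_closed k) (mem_insert _ _) (hPI k) k a⟩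
  · rintro k k' hk A ⟨x, hx, hA⟩
    exact ⟨x, insert_subset_insert (biUnion_subset_biUnion_left fun i hi => le_trans hi hk) hx,
      hA⟩
  · rintro k A B hAB ⟨x, hx, hB⟩
    exact ⟨x, hx, fun n hn => hB n (hAB hn)⟩
  · intro A hA
    obtain ⟨i, hi⟩ := mem_iUnion.1 ((hC A).1 hA)
    refine ⟨i, chiSet A, mem_insert_of_mem _ (mem_iUnion₂.2 ⟨i, le_rfl, hi⟩), fun n hn => ?_⟩
    simp [chiSet, hn]

def boundedSlaloms (g : ℕ → ℕ) : Set (ℕ → Finset ℕ) :=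
  {S | ∀ i, S i ⊆ Finset.range (g i + 1) ∧ (S i).card ≤ i}

theorem mk_boundedSlaloms (g : ℕ → ℕ) : #(boundedSlaloms g) = 𝔠 := by
  classical
  apply le_antisymm
  · calc #(boundedSlaloms g) ≤ #(ℕ → Finset ℕ) := mk_set_le _
      _ = 𝔠 := by simp
  · let S : Set ℕ → boundedSlaloms g := fun A =>
      ⟨fun i => if i ∈ Nat.succ '' A then {0} else ∅, fun i => by
        dsimp only
        split_ifs with h
        · obtain ⟨i, -, rfl⟩ := h
          simp
        · simp⟩
    have hS : Function.Injective S := fun A B hAB => by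
      ext i
      have h := congrFun (congrArg Subtype.val hAB) (i + 1)
      by_cases hA : i ∈ A <;> by_cases hB : i ∈ B <;> simp_all [S]
    simpa using mk_le_of_injective hS

theorem exists_localizing_slaloms {β : Type} [Encodable β] (Φ : ℕ → Finset β) :
    ∃ (ι : Type) (S : ι → ℕ → Finset β), #ι ≤ lNum ∧ (∀ i k, (S i k).card ≤ k) ∧
      ∀ φ : ℕ → β, (∀ k, φ k ∈ Φ k) → ∃ i, ∀ᶠ k in atTop, φ k ∈ S i k := by
  obtain ⟨𝒮, h𝒮_slalom, h𝒮_loc, h𝒮_card⟩ := lNum_spec fun k => (Φ k).sup Encodable.encode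
  have hinj : Set.InjOn (Encodable.encode (α := β)) univ := Encodable.encode_injective.injOn
  refine ⟨𝒮, fun S k => (S.1 k).preimage Encodable.encode (hinj.mono (subset_univ _)),
    h𝒮_card.le, fun S k => ?_, fun φ hφ => ?_⟩
  · exact (Finset.card_le_card_of_injOn Encodable.encode (fun b hb => Finset.mem_preimage.1 hb)
      (hinj.mono (subset_univ _))).trans (h𝒮_slalom S S.2 k).2
  · obtain ⟨S, hS, hφS⟩ := h𝒮_loc (fun k => Encodable.encode (φ k))
      (Eventually.of_forall fun k => Finset.le_sup (hφ k))
    exact ⟨⟨S, hS⟩, by simpa using hφS⟩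

theorem exists_eventually_subset_of_exhaustion {I : Set (Set ℕ)} (hI : IsIdealOn I)
    {L : ℕ → Set (Set ℕ)} (hL_mono : Monotone L) (hL : ∀ A ∈ I, ∃ k, A ∈ L k)
    {B : ℕ → Set ℕ} (hB : ∀ n, B n ∈ I) :
    ∃ F : ℕ → Set ℕ, (∀ᶠ k in atTop, F k ∈ L k) ∧ ∀ n, ∀ᶠ k in atTop, B n ⊆ F k := by
  classical
  let E := accumulate B
  choose r hr using fun n => hL (E n) (hI.accumulate_mem hB n)
  -- `F k` is the largest accumulated union `E q` with `q ≤ k` that already lies in `L k`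
  let q : ℕ → ℕ := fun k => Nat.findGreatest (fun n => E n ∈ L k) k
  have hq (n k : ℕ) (hnk : n ≤ k) (hrk : r n ≤ k) : n ≤ q k ∧ E (q k) ∈ L k :=
    ⟨Nat.le_findGreatest hnk (hL_mono hrk (hr n)),
      Nat.findGreatest_spec (P := fun n => E n ∈ L k) hnk (hL_mono hrk (hr n))⟩
  refine ⟨fun k => E (q k), ?_, fun n => ?_⟩
  · filter_upwards [eventually_ge_atTop (r 0)] with k hrk
    exact (hq 0 k k.zero_le hrk).2
  · filter_upwards [eventually_ge_atTop n, eventually_ge_atTop (r n)] with k hnk hrk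
    exact subset_accumulate.trans (monotone_accumulate (hq n k hnk hrk).1)

theorem GappedExhaustion.sInf_nonStarOmegaFam_le_lNum {I : Set (Set ℕ)} {L : ℕ → Set (Set ℕ)}
    (hL : GappedExhaustion I L) (hI : IsIdealOn I) : sInf (nonStarOmegaFam I) ≤ lNum := by
  classical
  choose N hN using hL.exists_gap
  let m : ℕ → ℕ := fun k => Nat.rec 0 N k
  obtain ⟨ι, S, hι, hS_card, hS_loc⟩ :=
    exists_localizing_slaloms fun k => (Finset.range (m (k + 1))).powerset
  have hgap (i : ι) (k : ℕ) : ∃ j ∈ Ico (m k) (m (k + 1)),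
      ∀ T ∈ S i k, (T : Set ℕ) ∈ L k → j ∉ T := by
    obtain ⟨j, hj, hjT⟩ := hN k (m k)
      (Finset.image (fun T : Finset ℕ => (T : Set ℕ)) {T ∈ S i k | (T : Set ℕ) ∈ L k})
      (Finset.card_image_le.trans ((Finset.card_filter_le _ _).trans (hS_card i k)))
      (Finset.forall_mem_image.2 fun T hT => (Finset.mem_filter.1 hT).2)
    exact ⟨j, hj, fun T hT hTL =>
      hjT T (Finset.mem_image_of_mem _ (Finset.mem_filter.2 ⟨hT, hTL⟩))⟩
  choose esc hesc_mem hesc_gap using hgap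
  have hesc_mono (i : ι) : StrictMono (esc i) :=
    strictMono_nat_of_lt_succ fun k => (hesc_mem i k).2.trans_le (hesc_mem i (k + 1)).1
  let 𝒜 : Set (Set ℕ) := range fun i => range (esc i)
  suffices h𝒜 : #𝒜 ∈ nonStarOmegaFam I from (csInf_le' h𝒜).trans (mk_range_le.trans hι)
  refine ⟨𝒜, ?_, ?_, rfl⟩
  · rintro _ ⟨i, rfl⟩
    exact infinite_range_of_injective (hesc_mono i).injective
  · intro B hB
    obtain ⟨F, hF_mem, hF_sub⟩ :=
      exists_eventually_subset_of_exhaustion hI hL.mono hL.exists_mem hB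
    obtain ⟨i, hi⟩ := hS_loc (fun k => (Finset.range (m (k + 1))).filter (· ∈ F k))
      fun k => Finset.mem_powerset.2 (Finset.filter_subset _ _)
    refine ⟨range (esc i), mem_range_self i, fun n => ?_⟩
    have hesc_notMem : ∀ᶠ k in cofinite, esc i k ∉ B n := by
      rw [Nat.cofinite_eq_atTop]
      filter_upwards [hi, hF_mem, hF_sub n] with k hk hFk hBF hmem
      refine hesc_gap i k _ hk (hL.mem_of_subset (by simp [ofPred_and]) hFk) ?_
      simpa using ⟨(hesc_mem i k).2, hBF hmem⟩
    refine ((eventually_cofinite.1 hesc_notMem).image (esc i)).subset ?_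
    rintro _ ⟨⟨k, rfl⟩, hk⟩
    exact ⟨k, not_not.2 hk, rfl⟩

/-- For every `F_σ` ideal `I` on `ω`, `non*_ω(I) ≤ 𝔩`. -/
theorem stmt14 (I : Set (Set ℕ)) (hI : IsIdealOn I) (hF : IsFSigmaIdeal I) :
    sInf (nonStarOmegaFam I) ≤ lNum := by
  obtain ⟨L, hL⟩ := exists_gappedExhaustion hI hF
  exact hL.sInf_nonStarOmegaFam_le_lNum hI
end
end
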